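/- arXiv:2407.05503 — 7 statements merged into one kernel-verified Lean document; each statement's English description precedes it below -/
import Mathlib

section
/- Let p be a continuous even function on ℝ, non-decreasing on ℝ₊, with 1 ≤ p(x) ≤ 2 for all x and lim_{x→∞} p(x) = p⋄ ≤ 2, and define q(x) = p'(1/x) for x ≠ 0, where p'(y) is the conjugate exponent of p(y). If q is log-Hölder continuous and there is a constant C > 0 such that ‖f̂‖_{q(·)} ≤ C‖f‖_{p(·)} for every Schwartz function f on ℝ, then p is constant: p(x) = p⋄ for all x. -/
open MeasureTheory Filter
open scoped ENNReal FourierTransform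

/-- The modular `ρ_q(g) = ∫_ℝ |g(x)|^{q(x)} dx` for an exponent `q : ℝ → [1,∞]`;
at points where `q x = ∞` the integrand is `0` if `|g x| ≤ 1` and `∞` otherwise. -/
noncomputable def modularE (q : ℝ → ℝ≥0∞) (g : ℝ → ℂ) : ℝ≥0∞ :=
  ∫⁻ x : ℝ,
    if q x = ∞ then (if ‖g x‖ ≤ 1 then 0 else ∞)
    else ENNReal.ofReal (‖g x‖ ^ (q x).toReal)

/-- The variable Lebesgue norm `‖g‖_{q(·)} = inf {λ > 0 : ρ_q(g/λ) ≤ 1}` (as an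
extended real number, `∞` if no such `λ` exists). -/
noncomputable def varNormE (q : ℝ → ℝ≥0∞) (g : ℝ → ℂ) : ℝ≥0∞ :=
  sInf {l : ℝ≥0∞ | ∃ lr : ℝ, 0 < lr ∧ l = ENNReal.ofReal lr ∧
    modularE q (fun x => g x / (lr : ℂ)) ≤ 1}

/-- `q` is log-Hölder continuous. -/
def LogHolder (q : ℝ → ℝ≥0∞) : Prop :=
  ∃ C : ℝ, 0 < C ∧ ∀ x y : ℝ, |x - y| < 1 / 2 →
    ((q x ≠ ∞ → q y ≠ ∞ →
        |(q x).toReal - (q y).toReal| ≤ C / (-Real.log |x - y|)) ∧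
      (q x = ∞ → ((q y)⁻¹).toReal ≤ C / (-Real.log |x - y|)))

/-- The conjugate exponent `a'` of `a ∈ [1,∞]`, i.e. `1/a + 1/a' = 1`. -/
noncomputable def conjExp (a : ℝ≥0∞) : ℝ≥0∞ := (1 - a⁻¹)⁻¹

/-!
Suppose `p x₀ < p⋄` and pick `p x₀ < α < r < p⋄`. Then `p ≥ r` on some `[T, ∞)` and, by continuity
and monotonicity of `p`, `q ξ = p(1/ξ)' ≥ α'` for all `ξ ≥ a`, for some `a > 0`. Test the inequality
on the modulated Gaussians `F_L(x) ≈ exp(-π ((x - X) / L)²) e^{2πiax}` with `X = T + L²`: `|F_L|`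
has width `L` and, up to a Gaussian tail, lives where `p ≥ r`, while `|F̂_L|` has height `≈ L` on a
window of width `1/L` where `q ≥ α'`. Hence `‖F_L‖_{p(·)} ≲ L^{1/r}` and
`‖F̂_L‖_{q(·)} ≳ L · L^{-1/α'} = L^{1/α}`, which contradicts the inequality as `L → ∞`.
-/

section GaussianSchwartz

open Complex Polynomial Asymptotics Topology
open scoped Real SchwartzMap ContDiff

/-- The form of Gaussian whose Fourier transform is `fourier_gaussian_pi'`. -/
noncomputable def gaussian (b c : ℂ) (x : ℝ) : ℂ := cexp (-π * b * x ^ 2 + 2 * π * c * x)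

lemma hasDerivAt_gaussian (b c : ℂ) (x : ℝ) :
    HasDerivAt (gaussian b c) ((-2 * π * b * x + 2 * π * c) * gaussian b c x) x := by
  have h := (((hasDerivAt_pow 2 (x : ℂ)).const_mul (-π * b)).add
    ((hasDerivAt_id (x : ℂ)).const_mul (2 * π * c))).cexp.comp_ofReal
  convert h using 1
  · ext y
    simp [gaussian]
  · simp only [gaussian, Pi.add_apply, id]
    push_cast
    ring

lemma contDiff_gaussian (b c : ℂ) : ContDiff ℝ ∞ (gaussian b c) := by
  have : ContDiff ℝ ∞ (fun x : ℝ => (x : ℂ)) := ofRealCLM.contDiff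
  unfold gaussian
  fun_prop

lemma exists_iteratedDeriv_gaussian_eq (b c : ℂ) (n : ℕ) :
    ∃ Q : ℂ[X], iteratedDeriv n (gaussian b c) = fun x : ℝ => Q.eval (x : ℂ) * gaussian b c x := by
  induction n with
  | zero => exact ⟨1, by simp⟩
  | succ n ih =>
    obtain ⟨Q, hQ⟩ := ih
    refine ⟨derivative Q + Q * (C (-2 * π * b) * X + C (2 * π * c)), funext fun x => ?_⟩
    rw [iteratedDeriv_succ, hQ]
    refine (((Q.hasDerivAt (x : ℂ)).comp_ofReal).mul (hasDerivAt_gaussian b c x)).deriv.trans ?_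
    simp only [eval_add, eval_mul, eval_C, eval_X]
    ring

lemma tendsto_eval_mul_gaussian_cocompact {b : ℂ} (hb : 0 < b.re) (c : ℂ) (R : ℂ[X]) :
    Tendsto (fun x : ℝ => R.eval (x : ℂ) * gaussian b c x) (cocompact ℝ) (𝓝 0) := by
  induction R using Polynomial.induction_on' with
  | add P Q hP hQ => simpa [add_mul] using hP.add hQ
  | monomial n a =>
    have hlittle := cexp_neg_quadratic_isLittleO_abs_rpow_cocompact
      (a := -π * b) (by simpa using mul_pos Real.pi_pos hb) (2 * π * c) (-n)
    have hpow : (fun x : ℝ => (x : ℂ) ^ n) =O[cocompact ℝ] (fun x => |x| ^ (n : ℝ)) :=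
      IsBigO.of_bound 1 (Eventually.of_forall fun x => by simp)
    have hone : (fun x : ℝ => |x| ^ (n : ℝ) * |x| ^ (-n : ℝ)) =O[cocompact ℝ] (fun _ => (1 : ℝ)) :=
      IsBigO.of_bound 1 (Eventually.of_forall fun x => by
        rw [Real.rpow_neg (abs_nonneg x)]
        simpa using mul_inv_le_one (G₀ := ℝ))
    have := (isLittleO_one_iff ℝ).1 ((hpow.mul_isLittleO hlittle).trans_isBigO hone)
    simpa [mul_assoc, gaussian] using this.const_mul a

lemma exists_norm_le_of_tendsto_cocompact {α β : Type*} [TopologicalSpace α]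
    [NormedAddCommGroup β] {f : α → β} (hf : Continuous f) (h : Tendsto f (cocompact α) (𝓝 0)) :
    ∃ C, ∀ x, ‖f x‖ ≤ C :=
  ((ZeroAtInftyContinuousMap.isBounded_range ⟨⟨f, hf⟩, h⟩).exists_norm_le).imp
    fun _ hC x => hC _ ⟨x, rfl⟩

noncomputable def gaussianSchwartz {b : ℂ} (hb : 0 < b.re) (c : ℂ) : 𝓢(ℝ, ℂ) where
  toFun := gaussian b c
  smooth' := contDiff_gaussian b c
  decay' k n := by
    obtain ⟨Q, hQ⟩ := exists_iteratedDeriv_gaussian_eq b c n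
    have hcont : Continuous fun x : ℝ => (X ^ k * Q).eval (x : ℂ) * gaussian b c x :=
      ((X ^ k * Q).continuous.comp continuous_ofReal).mul (contDiff_gaussian b c).continuous
    refine (exists_norm_le_of_tendsto_cocompact hcont
      (tendsto_eval_mul_gaussian_cocompact hb c _)).imp fun C hC x => ?_
    simpa [norm_iteratedFDeriv_eq_norm_iteratedDeriv, hQ, mul_assoc] using hC x

/-- Up to the constant factor `exp (π X² / L²)`, this is `x ↦ exp (-π ((x - X) / L)²) e^{2πiax}`. -/
noncomputable def wavePacket {L : ℝ} (hL : 0 < L) (X a : ℝ) : 𝓢(ℝ, ℂ) :=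
  gaussianSchwartz (b := ((L ^ 2)⁻¹ : ℝ)) (by rw [ofReal_re]; positivity)
    ((((L ^ 2)⁻¹ * X : ℝ) : ℂ) + a * I)

lemma norm_wavePacket {L : ℝ} (hL : 0 < L) (X a x : ℝ) :
    ‖wavePacket hL X a x‖ = rexp (π * X ^ 2 / L ^ 2) * rexp (-(π / L ^ 2) * (x - X) ^ 2) := by
  have hexp : -π * (((L ^ 2)⁻¹ : ℝ) : ℂ) * x ^ 2 + 2 * π * ((((L ^ 2)⁻¹ * X : ℝ) : ℂ) + a * I) * x
      = ((π * X ^ 2 / L ^ 2 + -(π / L ^ 2) * (x - X) ^ 2 : ℝ) : ℂ)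
        + ((2 * π * a * x : ℝ) : ℂ) * I := by
    push_cast
    ring
  change ‖gaussian _ _ x‖ = _
  rw [gaussian, hexp, Complex.exp_add, norm_mul, norm_exp_ofReal, norm_exp_ofReal_mul_I, mul_one,
    Real.exp_add]

lemma norm_fourier_wavePacket {L : ℝ} (hL : 0 < L) (X a t : ℝ) :
    ‖𝓕 ⇑(wavePacket hL X a) t‖ =
      L * rexp (π * X ^ 2 / L ^ 2) * rexp (-(π * L ^ 2) * (t - a) ^ 2) := by
  have hb : 0 < (((L ^ 2)⁻¹ : ℝ) : ℂ).re := by rw [ofReal_re]; positivity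
  have := congrFun (fourier_gaussian_pi' hb ((((L ^ 2)⁻¹ * X : ℝ) : ℂ) + a * I)) t
  change ‖𝓕 (gaussian _ _) t‖ = _
  have hexp : -π / (((L ^ 2)⁻¹ : ℝ) : ℂ) * (t + I * ((((L ^ 2)⁻¹ * X : ℝ) : ℂ) + a * I)) ^ 2
      = ((π * X ^ 2 / L ^ 2 + -(π * L ^ 2) * (t - a) ^ 2 : ℝ) : ℂ)
        + ((-2 * π * (t - a) * X : ℝ) : ℂ) * I := by
    have hL0 : (L : ℂ) ≠ 0 := ofReal_ne_zero.2 hL.ne'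
    push_cast
    field_simp
    ring_nf
    simp only [I_sq, I_pow_three, I_pow_four]
    ring
  have hsqrt : ‖1 / (((L ^ 2)⁻¹ : ℝ) : ℂ) ^ (1 / 2 : ℂ)‖ = L := by
    rw [norm_div, norm_one, norm_cpow_eq_rpow_re_of_pos (by positivity),
      show (1 / 2 : ℂ).re = 1 / 2 by norm_num, Real.inv_rpow (by positivity),
      ← Real.sqrt_eq_rpow, Real.sqrt_sq hL.le, one_div, inv_inv]
  unfold gaussian
  rw [this, norm_mul, hsqrt, hexp, Complex.exp_add, norm_mul, norm_exp_ofReal,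
    norm_exp_ofReal_mul_I, mul_one, Real.exp_add, mul_assoc]

end GaussianSchwartz

open Complex Topology
open scoped Real

section VariableLebesgue

variable {q : ℝ → ℝ≥0∞} {g : ℝ → ℂ}

lemma varNormE_le_ofReal {l : ℝ} (hl : 0 < l) (h : modularE q (fun x => g x / l) ≤ 1) :
    varNormE q g ≤ ENNReal.ofReal l :=
  sInf_le ⟨l, hl, rfl, h⟩

lemma modularE_ofReal_le_ofReal_integral {p h : ℝ → ℝ} (hp : ∀ x, 0 ≤ p x) (hh : Integrable h)
    (hgh : ∀ x, ‖g x‖ ^ p x ≤ h x) :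
    modularE (fun x => ENNReal.ofReal (p x)) g ≤ ENNReal.ofReal (∫ x, h x) := by
  rw [ofReal_integral_eq_lintegral_ofReal hh
    (Eventually.of_forall fun x => (Real.rpow_nonneg (norm_nonneg _) _).trans (hgh x))]
  refine lintegral_mono fun x => ?_
  rw [if_neg ENNReal.ofReal_ne_top, ENNReal.toReal_ofReal (hp x)]
  exact ENNReal.ofReal_le_ofReal (hgh x)

lemma ofReal_rpow_mul_volume_le_modularE {S : Set ℝ} {τ B : ℝ} (hS : MeasurableSet S)
    (hτ : 1 < τ) (hg : ∀ t ∈ S, τ ≤ ‖g t‖)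
    (hq : ∀ t ∈ S, q t ≠ ∞ → B ≤ (q t).toReal) :
    ENNReal.ofReal (τ ^ B) * volume S ≤ modularE q g := by
  rw [← setLIntegral_const]
  refine (setLIntegral_mono' hS fun t ht => ?_).trans (setLIntegral_le_lintegral S _)
  by_cases hqt : q t = ∞
  · simp [hqt, (hτ.trans_le (hg t ht)).not_ge]
  · rw [if_neg hqt]
    exact ENNReal.ofReal_le_ofReal <| (Real.rpow_le_rpow_of_exponent_le hτ.le (hq t ht hqt)).trans
      (Real.rpow_le_rpow (by linarith) (hg t ht) ENNReal.toReal_nonneg)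

lemma ofReal_mul_rpow_le_varNormE {S : Set ℝ} {m ℓ B : ℝ} (hS : MeasurableSet S)
    (hm : 0 < m) (hℓ : 0 < ℓ) (hℓ1 : ℓ ≤ 1) (hB : 0 < B) (hvol : ENNReal.ofReal ℓ ≤ volume S)
    (hg : ∀ t ∈ S, m ≤ ‖g t‖) (hq : ∀ t ∈ S, q t ≠ ∞ → B ≤ (q t).toReal) :
    ENNReal.ofReal (m * ℓ ^ B⁻¹) ≤ varNormE q g := by
  refine le_sInf ?_
  rintro _ ⟨l, hl, rfl, hmod⟩
  refine ENNReal.ofReal_le_ofReal (not_lt.1 fun hlt => ?_)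
  have hℓB : ℓ ^ B⁻¹ ≤ 1 := Real.rpow_le_one hℓ.le hℓ1 (inv_nonneg.2 hB.le)
  have hτ : 1 < m / l := (one_lt_div hl).2 (hlt.trans_le (mul_le_of_le_one_right hm.le hℓB))
  have hgl : ∀ t ∈ S, m / l ≤ ‖g t / l‖ := fun t ht => by
    rw [norm_div, norm_real, Real.norm_of_nonneg hl.le]
    exact div_le_div_of_nonneg_right (hg t ht) hl.le
  have hgt : 1 < (m / l) ^ B * ℓ := by
    have h1 : 1 < (m / l * ℓ ^ B⁻¹) ^ B :=
      Real.one_lt_rpow (by rwa [div_mul_eq_mul_div, one_lt_div hl]) hB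
    rwa [Real.mul_rpow (by positivity) (by positivity), Real.rpow_inv_rpow hℓ.le hB.ne'] at h1
  have := (mul_le_mul' le_rfl hvol).trans
    ((ofReal_rpow_mul_volume_le_modularE hS hτ hgl hq).trans hmod)
  rw [← ENNReal.ofReal_mul (by positivity), ENNReal.ofReal_le_one] at this
  linarith

end VariableLebesgue

lemma integral_exp_neg_mul_sub_sq (b X : ℝ) : ∫ x, rexp (-b * (x - X) ^ 2) = √(π / b) := by
  rw [integral_sub_right_eq_self (fun x => rexp (-b * x ^ 2)) X, integral_gaussian]

lemma exp_neg_mul_sq_le_of_le_abs {L X x : ℝ} (hL : 0 < L) (hx : L ^ 2 ≤ |x - X|) :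
    rexp (-(π / L ^ 2) * (x - X) ^ 2)
      ≤ rexp (-(π * L ^ 2 / 2)) * rexp (-(π / (2 * L ^ 2)) * (x - X) ^ 2) := by
  have hsq : (L ^ 2) ^ 2 ≤ (x - X) ^ 2 := by
    rw [← sq_abs (x - X)]
    exact pow_le_pow_left₀ (by positivity) hx 2
  rw [← Real.exp_add, Real.exp_le_exp]
  have key : π * L ^ 2 / 2 ≤ π / (2 * L ^ 2) * (x - X) ^ 2 := by
    rw [div_mul_eq_mul_div, le_div_iff₀ (by positivity)]
    nlinarith [Real.pi_pos]
  have hsplit : π / L ^ 2 * (x - X) ^ 2 = 2 * (π / (2 * L ^ 2) * (x - X) ^ 2) := by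
    field_simp
  linarith

lemma sqrt_two_mul_sq_le_exp (L : ℝ) : √(2 * L ^ 2) ≤ rexp (π * L ^ 2 / 2) := by
  have h1 : √(2 * L ^ 2) ≤ 1 + L ^ 2 :=
    Real.sqrt_le_iff.2 ⟨by positivity, by nlinarith [sq_nonneg (L ^ 2 - 1)]⟩
  have h2 : 1 + L ^ 2 ≤ 1 + π * L ^ 2 / 2 := by nlinarith [Real.pi_gt_three, sq_nonneg L]
  linarith [Real.add_one_le_exp (π * L ^ 2 / 2)]

/-- With `v x = exp (-π ((x - X) / L)²) / (2 L^{1/r})`, the first term is `v x ^ r` and the second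
bounds `v x` on the tail `|x - X| ≥ L²`. -/
noncomputable def gaussianMajorant (r L X x : ℝ) : ℝ :=
  (2 ^ r * L)⁻¹ * rexp (-(π * r / L ^ 2) * (x - X) ^ 2)
    + 2⁻¹ * rexp (-(π * L ^ 2 / 2)) * rexp (-(π / (2 * L ^ 2)) * (x - X) ^ 2)

lemma integrable_exp_neg_mul_sub_sq {b : ℝ} (hb : 0 < b) (X : ℝ) :
    Integrable fun x => rexp (-b * (x - X) ^ 2) :=
  (integrable_exp_neg_mul_sq hb).comp_sub_right X

lemma integrable_gaussianMajorant {r L : ℝ} (hr : 0 < r) (hL : 0 < L) (X : ℝ) :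
    Integrable (gaussianMajorant r L X) :=
  ((integrable_exp_neg_mul_sub_sq (by positivity) X).const_mul _).add
    ((integrable_exp_neg_mul_sub_sq (by positivity) X).const_mul _)

lemma integral_gaussianMajorant_le_one {r L : ℝ} (hr : 1 ≤ r) (hL : 0 < L) (X : ℝ) :
    ∫ x, gaussianMajorant r L X x ≤ 1 := by
  unfold gaussianMajorant
  rw [integral_add ((integrable_exp_neg_mul_sub_sq (by positivity) X).const_mul _)
    ((integrable_exp_neg_mul_sub_sq (by positivity) X).const_mul _),
    integral_const_mul, integral_const_mul, integral_exp_neg_mul_sub_sq,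
    integral_exp_neg_mul_sub_sq]
  have h2r : (2 : ℝ) ≤ 2 ^ r := by simpa using Real.rpow_le_rpow_of_exponent_le one_le_two hr
  have hsqrt : √(π / (π * r / L ^ 2)) ≤ L := by
    rw [Real.sqrt_le_left hL.le, div_le_iff₀ (by positivity)]
    field_simp
    nlinarith [Real.pi_pos]
  have hfirst : (2 ^ r * L)⁻¹ * √(π / (π * r / L ^ 2)) ≤ 2⁻¹ :=
    calc (2 ^ r * L)⁻¹ * √(π / (π * r / L ^ 2)) ≤ (2 ^ r * L)⁻¹ * L := by gcongr
      _ = (2 ^ r)⁻¹ := by field_simp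
      _ ≤ 2⁻¹ := by gcongr
  have hsecond : 2⁻¹ * rexp (-(π * L ^ 2 / 2)) * √(π / (π / (2 * L ^ 2))) ≤ 2⁻¹ :=
    calc 2⁻¹ * rexp (-(π * L ^ 2 / 2)) * √(π / (π / (2 * L ^ 2)))
        ≤ 2⁻¹ * rexp (-(π * L ^ 2 / 2)) * rexp (π * L ^ 2 / 2) := by
          rw [div_div_eq_mul_div, mul_div_cancel_left₀ _ Real.pi_ne_zero]
          gcongr
          exact sqrt_two_mul_sq_le_exp L
      _ = 2⁻¹ := by rw [mul_assoc, ← Real.exp_add, neg_add_cancel, Real.exp_zero, mul_one]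
  linarith

lemma rpow_le_gaussianMajorant {r T L X x s : ℝ} (hr : 1 ≤ r) (hL : 1 ≤ L) (hX : T + L ^ 2 ≤ X)
    (hs : 1 ≤ s) (hsr : T ≤ x → r ≤ s) :
    (rexp (-(π / L ^ 2) * (x - X) ^ 2) / (2 * L ^ r⁻¹)) ^ s ≤ gaussianMajorant r L X x := by
  have hL0 : 0 < L := by linarith
  have hLr : 1 ≤ L ^ r⁻¹ := Real.one_le_rpow hL (by positivity)
  set v := rexp (-(π / L ^ 2) * (x - X) ^ 2) / (2 * L ^ r⁻¹) with hv
  have hv0 : 0 ≤ v := by positivity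
  have hv1 : v ≤ 1 := by
    rw [hv, div_le_one (by positivity)]
    have : 0 ≤ π / L ^ 2 * (x - X) ^ 2 := by positivity
    exact (Real.exp_le_one_iff.2 (by linarith)).trans (by linarith)
  have hfirst : 0 ≤ (2 ^ r * L)⁻¹ * rexp (-(π * r / L ^ 2) * (x - X) ^ 2) := by positivity
  have hsecond :
      0 ≤ 2⁻¹ * rexp (-(π * L ^ 2 / 2)) * rexp (-(π / (2 * L ^ 2)) * (x - X) ^ 2) := by positivity
  rw [gaussianMajorant]
  rcases le_or_gt T x with hx | hx
  · have hvr : v ^ r = (2 ^ r * L)⁻¹ * rexp (-(π * r / L ^ 2) * (x - X) ^ 2) := by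
      rw [hv, Real.div_rpow (by positivity) (by positivity),
        Real.mul_rpow (by norm_num) (by positivity), ← Real.rpow_mul hL0.le,
        inv_mul_cancel₀ (by positivity), Real.rpow_one, ← Real.exp_mul]
      ring_nf
    linarith [Real.rpow_le_rpow_of_exponent_ge' hv0 hv1 (by linarith) (hsr hx)]
  · have htail := exp_neg_mul_sq_le_of_le_abs (X := X) (x := x) hL0
      (by rw [abs_sub_comm, abs_of_pos (by nlinarith)]; linarith)
    have hvφ : v ≤ rexp (-(π / L ^ 2) * (x - X) ^ 2) / 2 :=
      div_le_div_of_nonneg_left (by positivity) (by norm_num) (by linarith)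
    have := Real.rpow_le_rpow_of_exponent_ge' hv0 hv1 zero_le_one hs
    rw [Real.rpow_one] at this
    linarith

lemma varNormE_ofReal_le_of_norm_le_gaussian {p : ℝ → ℝ} {g : ℝ → ℂ} {r T L X M : ℝ}
    (hp : ∀ x, 1 ≤ p x) (hpT : ∀ x, T ≤ x → r ≤ p x) (hr : 1 ≤ r) (hL : 1 ≤ L)
    (hX : T + L ^ 2 ≤ X) (hM : 0 < M)
    (hg : ∀ x, ‖g x‖ ≤ M * rexp (-(π / L ^ 2) * (x - X) ^ 2)) :
    varNormE (fun x => ENNReal.ofReal (p x)) g ≤ ENNReal.ofReal (2 * M * L ^ r⁻¹) := by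
  have hL0 : 0 < L := by linarith
  have hgv : ∀ x, ‖g x / ↑(2 * M * L ^ r⁻¹)‖
      ≤ rexp (-(π / L ^ 2) * (x - X) ^ 2) / (2 * L ^ r⁻¹) := fun x => by
    rw [norm_div, norm_real, Real.norm_of_nonneg (by positivity), div_le_div_iff₀ (by positivity)
      (by positivity)]
    nlinarith [hg x, Real.rpow_pos_of_pos hL0 r⁻¹]
  apply varNormE_le_ofReal (by positivity)
  calc modularE _ _ ≤ ENNReal.ofReal (∫ x, gaussianMajorant r L X x) :=
        modularE_ofReal_le_ofReal_integral (fun x => by linarith [hp x])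
          (integrable_gaussianMajorant (by linarith) hL0 X) fun x =>
            (Real.rpow_le_rpow (norm_nonneg _) (hgv x) (by linarith [hp x])).trans
              (rpow_le_gaussianMajorant hr hL hX (hp x) (hpT x))
    _ ≤ 1 := ENNReal.ofReal_le_one.2 (integral_gaussianMajorant_le_one hr hL0 X)

lemma varNormE_ofReal_wavePacket_le {p : ℝ → ℝ} {r T L : ℝ} (hL0 : 0 < L) (hp : ∀ x, 1 ≤ p x)
    (hpT : ∀ x, T ≤ x → r ≤ p x) (hr : 1 ≤ r) (hL : 1 ≤ L) (a : ℝ) :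
    varNormE (fun x => ENNReal.ofReal (p x)) (wavePacket hL0 (T + L ^ 2) a)
      ≤ ENNReal.ofReal (2 * rexp (π * (T + L ^ 2) ^ 2 / L ^ 2) * L ^ r⁻¹) :=
  varNormE_ofReal_le_of_norm_le_gaussian hp hpT hr hL le_rfl (Real.exp_pos _)
    fun x => (norm_wavePacket hL0 _ a x).le

lemma ofReal_le_varNormE_fourier_wavePacket {q : ℝ → ℝ≥0∞} {L a B : ℝ} (hL0 : 0 < L)
    (hL : 1 ≤ L) (hB : 0 < B) (hq : ∀ ξ, a ≤ ξ → q ξ ≠ ∞ → B ≤ (q ξ).toReal) (X : ℝ) :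
    ENNReal.ofReal (rexp (-π) * rexp (π * X ^ 2 / L ^ 2) * L ^ (1 - B⁻¹))
      ≤ varNormE q (𝓕 ⇑(wavePacket hL0 X a)) := by
  have hm : ∀ t ∈ Set.Icc a (a + L⁻¹),
      L * rexp (π * X ^ 2 / L ^ 2) * rexp (-π) ≤ ‖𝓕 ⇑(wavePacket hL0 X a) t‖ := by
    rintro t ⟨hat, htL⟩
    rw [norm_fourier_wavePacket]
    gcongr
    have hLt : L * (t - a) ≤ 1 :=
      calc L * (t - a) ≤ L * L⁻¹ := by gcongr; linarith
        _ = 1 := mul_inv_cancel₀ hL0.ne'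
    have hsq : (L * (t - a)) ^ 2 ≤ 1 := pow_le_one₀ (by nlinarith) hLt
    nlinarith [mul_le_mul_of_nonneg_left hsq Real.pi_pos.le]
  have hvol : ENNReal.ofReal L⁻¹ ≤ volume (Set.Icc a (a + L⁻¹)) := by
    rw [Real.volume_Icc, add_sub_cancel_left]
  convert ofReal_mul_rpow_le_varNormE measurableSet_Icc (by positivity) (by positivity)
    (inv_le_one_of_one_le₀ hL) hB hvol hm fun ξ hξ => hq ξ hξ.1 using 2
  rw [Real.inv_rpow hL0.le, Real.rpow_sub hL0, Real.rpow_one]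
  ring

lemma conjExp_anti : Antitone conjExp := fun _ _ h =>
  ENNReal.inv_le_inv.2 (tsub_le_tsub_left (ENNReal.inv_le_inv.2 h) 1)

lemma toReal_conjExp_ofReal {a : ℝ} (ha : 1 < a) :
    (conjExp (ENNReal.ofReal a)).toReal = (1 - a⁻¹)⁻¹ := by
  have : 0 < 1 - a⁻¹ := sub_pos.2 (inv_lt_one_of_one_lt₀ ha)
  rw [conjExp, ← ENNReal.ofReal_inv_of_pos (by linarith), ← ENNReal.ofReal_one,
    ← ENNReal.ofReal_sub _ (by positivity), ← ENNReal.ofReal_inv_of_pos this,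
    ENNReal.toReal_ofReal (by positivity)]

lemma le_toReal_conjExp_ofReal {s a : ℝ} (ha : 1 < a) (hs : s ≤ a)
    (hne : conjExp (ENNReal.ofReal s) ≠ ∞) :
    (1 - a⁻¹)⁻¹ ≤ (conjExp (ENNReal.ofReal s)).toReal :=
  toReal_conjExp_ofReal ha ▸ ENNReal.toReal_mono hne (conjExp_anti (ENNReal.ofReal_le_ofReal hs))

lemma le_of_tendsto_of_monotoneOn_of_even {p : ℝ → ℝ} {l : ℝ} (heven : ∀ x, p (-x) = p x)
    (hmono : MonotoneOn p (Set.Ici 0)) (hl : Tendsto p atTop (𝓝 l)) (x : ℝ) : p x ≤ l := by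
  have habs : p |x| = p x := by rcases abs_choice x with h | h <;> simp [h, heven]
  rw [← habs]
  exact ge_of_tendsto hl ((eventually_ge_atTop |x|).mono fun y hy =>
    hmono (abs_nonneg x) ((abs_nonneg x).trans hy) hy)

lemma le_of_forall_ofReal_mul_rpow_le {s t c d C : ℝ} (hc : 0 < c) (hd : 0 ≤ d)
    (h : ∀ L : ℝ, 1 ≤ L → ∃ M > 0,
      ENNReal.ofReal (c * M * L ^ s) ≤ ENNReal.ofReal C * ENNReal.ofReal (d * M * L ^ t)) :
    s ≤ t := by
  by_contra! hts
  obtain ⟨L, hLbig, hL⟩ := (((tendsto_rpow_atTop (sub_pos.2 hts)).eventually_gt_atTop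
    (C * d / c)).and (eventually_ge_atTop 1)).exists
  obtain ⟨M, hM, hle⟩ := h L hL
  have hL0 : 0 < L := by linarith
  rw [← ENNReal.ofReal_mul' (by positivity), ENNReal.ofReal_le_ofReal_iff'] at hle
  rcases hle with hle | hle
  · have hst : c * L ^ s ≤ C * d * L ^ t :=
      le_of_mul_le_mul_left (by linarith) hM
    rw [div_lt_iff₀ hc, Real.rpow_sub hL0, div_mul_eq_mul_div, lt_div_iff₀ (by positivity)] at hLbig
    linarith
  · exact (not_le.2 (by positivity)) hle

theorem stmt1_general (p : ℝ → ℝ) (hpc : Continuous p) (hpeven : ∀ x, p (-x) = p x)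
    (hpmono : MonotoneOn p (Set.Ici (0 : ℝ)))
    (hp1 : ∀ x, 1 ≤ p x)
    (pd : ℝ) (hpd : Tendsto p atTop (nhds pd))
    (q : ℝ → ℝ≥0∞)
    (hq : ∀ x : ℝ, x ≠ 0 → q x = conjExp (ENNReal.ofReal (p (1 / x))))
    (C : ℝ)
    (hHY : ∀ f : SchwartzMap ℝ ℂ,
      varNormE q (𝓕 ⇑f) ≤
        ENNReal.ofReal C * varNormE (fun x => ENNReal.ofReal (p x)) ⇑f) :
    ∀ x : ℝ, p x = pd := by
  intro x₀
  by_contra hne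
  obtain ⟨α, hpα, hαpd⟩ :=
    exists_between ((le_of_tendsto_of_monotoneOn_of_even hpeven hpmono hpd x₀).lt_of_ne hne)
  obtain ⟨r, hαr, hrpd⟩ := exists_between hαpd
  have hα : 1 < α := (hp1 x₀).trans_lt hpα
  have hB : 0 < (1 - α⁻¹)⁻¹ := inv_pos.2 (sub_pos.2 (inv_lt_one_of_one_lt₀ hα))
  obtain ⟨T, hT⟩ := eventually_atTop.1 (hpd.eventually (eventually_ge_nhds hrpd))
  have habs : p |x₀| < α := by rcases abs_choice x₀ with h | h <;> simp [h, hpeven, hpα]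
  obtain ⟨x₁, hpx₁, hx₁⟩ := (((hpc.continuousAt.eventually_lt continuousAt_const habs).filter_mono
    nhdsWithin_le_nhds).and (self_mem_nhdsWithin (s := Set.Ioi |x₀|))).exists
  have hx₁0 : 0 < x₁ := (abs_nonneg x₀).trans_lt hx₁
  have hqB : ∀ ξ, x₁⁻¹ ≤ ξ → q ξ ≠ ∞ → (1 - α⁻¹)⁻¹ ≤ (q ξ).toReal := fun ξ hξ hne => by
    have hξ0 : 0 < ξ := (inv_pos.2 hx₁0).trans_le hξ
    rw [hq ξ hξ0.ne'] at hne ⊢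
    refine le_toReal_conjExp_ofReal hα ((hpmono (by simp [hξ0.le]) hx₁0.le ?_).trans hpx₁.le) hne
    rwa [one_div, inv_le_comm₀ hξ0 hx₁0]
  have hbound : ∀ L : ℝ, 1 ≤ L → ∃ M > 0,
      ENNReal.ofReal (rexp (-π) * M * L ^ (1 - (1 - α⁻¹)⁻¹⁻¹))
        ≤ ENNReal.ofReal C * ENNReal.ofReal (2 * M * L ^ r⁻¹) := fun L hL => by
    have hL0 : 0 < L := by linarith
    refine ⟨rexp (π * (T + L ^ 2) ^ 2 / L ^ 2), Real.exp_pos _, ?_⟩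
    calc _ ≤ varNormE q (𝓕 ⇑(wavePacket hL0 (T + L ^ 2) x₁⁻¹)) :=
          ofReal_le_varNormE_fourier_wavePacket hL0 hL hB hqB _
      _ ≤ _ := hHY _
      _ ≤ _ := by
          gcongr
          exact varNormE_ofReal_wavePacket_le hL0 hp1 hT (hα.trans hαr).le hL _
  have hexp := le_of_forall_ofReal_mul_rpow_le (Real.exp_pos _) zero_le_two hbound
  rw [inv_inv, sub_sub_cancel] at hexp
  exact (inv_strictAnti₀ (by linarith) hαr).not_ge hexp

theorem stmt1 (p : ℝ → ℝ) (hpc : Continuous p) (hpeven : ∀ x, p (-x) = p x)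
    (hpmono : MonotoneOn p (Set.Ici (0 : ℝ)))
    (hp1 : ∀ x, 1 ≤ p x) (hp2 : ∀ x, p x ≤ 2)
    (pd : ℝ) (hpd : Tendsto p atTop (nhds pd)) (hpd2 : pd ≤ 2)
    (q : ℝ → ℝ≥0∞)
    (hq : ∀ x : ℝ, x ≠ 0 → q x = conjExp (ENNReal.ofReal (p (1 / x))))
    (hqLH : LogHolder q)
    (C : ℝ) (hC : 0 < C)
    (hHY : ∀ f : SchwartzMap ℝ ℂ,
      varNormE q (𝓕 ⇑f) ≤
        ENNReal.ofReal C * varNormE (fun x => ENNReal.ofReal (p x)) ⇑f) :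
    ∀ x : ℝ, p x = pd :=
  stmt1_general p hpc hpeven hpmono hp1 pd hpd q hq C hHY
end

section
/- Let p : ℝ → [1,∞) be a continuous, even function, non-decreasing on ℝ₊ and bounded, with lim_{x→∞} p(x) = p⋄. Then for every nonzero Schwartz function f on ℝ, the translates τ_h f(x) = f(x − h) satisfy lim_{h→∞} ‖τ_h f‖_{p(·)} = ‖f‖_{p⋄}, where ‖·‖_{p⋄} is the classical L^{p⋄}(ℝ) norm. -/
open MeasureTheory Filter
open scoped ENNReal

/-- The modular `ρ_p(g) = ∫_ℝ |g(x)|^{p(x)} dx` for a real-valued exponent `p`. -/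
noncomputable def modular (p : ℝ → ℝ) (g : ℝ → ℂ) : ℝ≥0∞ :=
  ∫⁻ x : ℝ, ENNReal.ofReal (‖g x‖ ^ p x)

/-- The variable Lebesgue norm `‖g‖_{p(·)} = inf {λ > 0 : ρ_p(g/λ) ≤ 1}`. -/
noncomputable def varNorm (p : ℝ → ℝ) (g : ℝ → ℂ) : ℝ :=
  sInf {l : ℝ | 0 < l ∧ modular p (fun x => g x / (l : ℂ)) ≤ 1}

open scoped Topology

private lemma aux_rpow_le {c B q M : ℝ} (hc : 0 ≤ c) (hcB : c ≤ B) (hq1 : 1 ≤ q)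
    (hqM : q ≤ M) : c ^ q ≤ max 1 B ^ (M - 1) * c := by
  rcases eq_or_lt_of_le hc with h0 | h0
  · rw [← h0, Real.zero_rpow (by linarith), mul_zero]
  · have h1B : (1 : ℝ) ≤ max 1 B := le_max_left _ _
    have hsplit : c ^ q = c ^ (q - 1) * c := by
      nth_rewrite 3 [← Real.rpow_one c]
      rw [← Real.rpow_add h0, sub_add_cancel]
    rw [hsplit]
    have h1 : c ^ (q - 1) ≤ max 1 B ^ (q - 1) :=
      Real.rpow_le_rpow hc (hcB.trans (le_max_right _ _)) (by linarith)
    have h2 : max 1 B ^ (q - 1) ≤ max 1 B ^ (M - 1) :=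
      Real.rpow_le_rpow_of_exponent_le h1B (by linarith)
    exact mul_le_mul (h1.trans h2) le_rfl h0.le (Real.rpow_nonneg (by linarith) _)

private lemma norm_div_real (z : ℂ) {l : ℝ} (hl : 0 < l) : ‖z / (l : ℂ)‖ = ‖z‖ / l := by
  rw [norm_div, Complex.norm_real, Real.norm_of_nonneg hl.le]

private lemma modular_anti (p : ℝ → ℝ) (hp1 : ∀ x, 1 ≤ p x) (g : ℝ → ℂ) {l l' : ℝ}
    (hl : 0 < l) (hll : l ≤ l') :
    modular p (fun x => g x / (l' : ℂ)) ≤ modular p (fun x => g x / (l : ℂ)) := by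
  refine lintegral_mono fun x => ENNReal.ofReal_le_ofReal ?_
  rw [norm_div_real _ hl, norm_div_real _ (lt_of_lt_of_le hl hll)]
  have hl' : 0 < l' := lt_of_lt_of_le hl hll
  have hle : ‖g x‖ / l' ≤ ‖g x‖ / l := by gcongr
  exact Real.rpow_le_rpow (div_nonneg (norm_nonneg _) hl'.le) hle (by linarith [hp1 x])

private lemma modular_shift (p : ℝ → ℝ) (f : ℝ → ℂ) (h l : ℝ) :
    modular p (fun x => f (x - h) / (l : ℂ))
      = ∫⁻ x : ℝ, ENNReal.ofReal (‖f x / (l : ℂ)‖ ^ p (x + h)) := by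
  unfold modular
  rw [← lintegral_add_right_eq_self
      (fun x : ℝ => ENNReal.ofReal (‖f x / (l : ℂ)‖ ^ p (x + h))) (-h)]
  simp [sub_eq_add_neg]

/-- A uniform bound on a Schwartz function. -/
private lemma schwartz_bound (f : SchwartzMap ℝ ℂ) : ∃ C : ℝ, ∀ x, ‖f x‖ ≤ C := by
  obtain ⟨C, -, hC⟩ := f.decay 0 0
  exact ⟨C, fun x => by simpa [norm_iteratedFDeriv_zero] using hC x⟩

private lemma integrable_norm_rpow_schwartz (f : SchwartzMap ℝ ℂ) {q : ℝ} (hq : 1 ≤ q) :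
    Integrable (fun x : ℝ => ‖f x‖ ^ q) := by
  obtain ⟨C, hC⟩ := schwartz_bound f
  have hcont : Continuous fun x : ℝ => ‖f x‖ ^ q :=
    f.continuous.norm.rpow_const fun x => Or.inr (by linarith)
  refine (f.integrable.norm.const_mul (max 1 C ^ (q - 1))).mono' hcont.aestronglyMeasurable ?_
  filter_upwards with x
  rw [Real.norm_of_nonneg (Real.rpow_nonneg (norm_nonneg _) _)]
  exact aux_rpow_le (norm_nonneg _) (hC x) hq le_rfl

private lemma modular_tendsto (p : ℝ → ℝ) (hpc : Continuous p) (hp1 : ∀ x, 1 ≤ p x)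
    {M : ℝ} (hM : ∀ x, p x ≤ M) {pd : ℝ} (hpd : Tendsto p atTop (𝓝 pd))
    (f : SchwartzMap ℝ ℂ) {l : ℝ} (hl : 0 < l) :
    Tendsto (fun h : ℝ => modular p (fun x => f (x - h) / (l : ℂ))) atTop
      (𝓝 (ENNReal.ofReal ((∫ x : ℝ, ‖f x‖ ^ pd) / l ^ pd))) := by
  have hpd1 : 1 ≤ pd := ge_of_tendsto' hpd hp1
  obtain ⟨C, hC⟩ := schwartz_bound f
  set c : ℝ → ℝ := fun x => ‖f x‖ / l with hc
  have hc0 : ∀ x, 0 ≤ c x := fun x => by positivity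
  have hcB : ∀ x, c x ≤ C / l := fun x => by
    simp only [hc]; gcongr; exact hC x
  set K : ℝ := max 1 (C / l) ^ (M - 1) with hK
  have hK0 : 0 ≤ K := Real.rpow_nonneg (le_trans zero_le_one (le_max_left _ _)) _
  have hcint : Integrable c := f.integrable.norm.div_const l
  have hbint : Integrable (fun x : ℝ => K * c x) := hcint.const_mul K
  -- rewrite the modular via translation
  simp only [modular_shift p (fun x => f x) _ l]
  have hnorm : ∀ x : ℝ, ‖f x / (l : ℂ)‖ = c x := fun x => norm_div_real _ hl
  -- identify the limit value
  have hpdint : Integrable (fun x : ℝ => c x ^ pd) := by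
    have : (fun x : ℝ => c x ^ pd) = fun x : ℝ => ‖f x‖ ^ pd / l ^ pd := by
      funext x; rw [hc]; exact Real.div_rpow (norm_nonneg _) hl.le _
    rw [this]
    exact (integrable_norm_rpow_schwartz f hpd1).div_const _
  have hval : ENNReal.ofReal ((∫ x : ℝ, ‖f x‖ ^ pd) / l ^ pd)
      = ∫⁻ x : ℝ, ENNReal.ofReal (c x ^ pd) := by
    rw [← integral_div]
    have : ∀ x : ℝ, ‖f x‖ ^ pd / l ^ pd = c x ^ pd := fun x =>
      (Real.div_rpow (norm_nonneg _) hl.le _).symm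
    simp_rw [this]
    exact ofReal_integral_eq_lintegral_ofReal hpdint
      (Filter.Eventually.of_forall fun x => Real.rpow_nonneg (hc0 x) _)
  rw [hval]
  simp_rw [hnorm]
  refine tendsto_lintegral_filter_of_dominated_convergence
    (fun x => ENNReal.ofReal (K * c x)) ?_ ?_ ?_ ?_
  · -- measurability
    filter_upwards with h
    have hm1 : Continuous c := f.continuous.norm.div_const l
    have hm2 : Continuous fun x : ℝ => p (x + h) :=
      hpc.comp (continuous_id.add continuous_const)
    exact ((hm1.rpow hm2 fun x => Or.inr (by linarith [hp1 (x + h)])).measurable).ennreal_ofReal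
  · -- domination
    filter_upwards with h
    filter_upwards with x
    exact ENNReal.ofReal_le_ofReal
      (aux_rpow_le (hc0 x) (hcB x) (hp1 (x + h)) (hM (x + h)))
  · -- finiteness of the bound
    exact hbint.lintegral_lt_top.ne
  · -- pointwise convergence
    filter_upwards with x
    refine (ENNReal.continuous_ofReal.tendsto _).comp ?_
    have hx : Tendsto (fun h : ℝ => p (x + h)) atTop (𝓝 pd) :=
      hpd.comp (tendsto_atTop_add_const_left atTop x tendsto_id)
    rcases eq_or_lt_of_le (hc0 x) with h0 | h0
    · have heq : ∀ h : ℝ, c x ^ p (x + h) = c x ^ pd := fun h => by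
        rw [← h0, Real.zero_rpow (by linarith [hp1 (x + h)]),
          Real.zero_rpow (by linarith)]
      simp only [heq]
      exact tendsto_const_nhds
    · exact ((Real.continuousAt_const_rpow h0.ne').tendsto).comp hx

theorem stmt2 (p : ℝ → ℝ) (hpc : Continuous p) (hpeven : ∀ x, p (-x) = p x)
    (hpmono : MonotoneOn p (Set.Ici (0 : ℝ))) (hp1 : ∀ x, 1 ≤ p x)
    (hpbdd : ∃ M : ℝ, ∀ x, p x ≤ M)
    (pd : ℝ) (hpd : Tendsto p atTop (nhds pd))
    (f : SchwartzMap ℝ ℂ) (hf : f ≠ 0) :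
    Tendsto (fun h : ℝ => varNorm p (fun x => f (x - h))) atTop
      (nhds ((∫ x : ℝ, ‖f x‖ ^ pd) ^ (1 / pd))) := by
  obtain ⟨M, hM⟩ := hpbdd
  have hpd1 : 1 ≤ pd := ge_of_tendsto' hpd hp1
  have hpd0 : 0 < pd := by linarith
  set I := ∫ x : ℝ, ‖f x‖ ^ pd with hIdef
  have hint : Integrable (fun x : ℝ => ‖f x‖ ^ pd) := integrable_norm_rpow_schwartz f hpd1
  -- positivity of I
  have hIpos : 0 < I := by
    rw [hIdef, integral_pos_iff_support_of_nonneg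
      (fun x => Real.rpow_nonneg (norm_nonneg _) _) hint]
    obtain ⟨x₀, hx₀⟩ : ∃ x₀, f x₀ ≠ 0 := by
      by_contra hcon
      push_neg at hcon
      exact hf (DFunLike.ext _ _ fun x => hcon x)
    have hcont : Continuous fun x : ℝ => ‖f x‖ ^ pd :=
      f.continuous.norm.rpow_const fun x => Or.inr hpd0.le
    have hopen : IsOpen (Function.support fun x : ℝ => ‖f x‖ ^ pd) := by
      have : (Function.support fun x : ℝ => ‖f x‖ ^ pd)
          = (fun x : ℝ => ‖f x‖ ^ pd) ⁻¹' {0}ᶜ := by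
        ext x; simp [Function.mem_support]
      rw [this]
      exact hcont.isOpen_preimage _ isOpen_compl_singleton
    refine hopen.measure_pos volume ⟨x₀, ?_⟩
    simp only [Function.mem_support]
    exact (Real.rpow_pos_of_pos (norm_pos_iff.2 hx₀) pd).ne'
  set N := I ^ (1 / pd) with hNdef
  have hNpos : 0 < N := Real.rpow_pos_of_pos hIpos _
  have hNpd : N ^ pd = I := by
    rw [hNdef, ← Real.rpow_mul hIpos.le, one_div, inv_mul_cancel₀ hpd0.ne', Real.rpow_one]
  -- the key convergence of the modular
  have key : ∀ l : ℝ, 0 < l →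
      Tendsto (fun h : ℝ => modular p (fun x => f (x - h) / (l : ℂ))) atTop
        (𝓝 (ENNReal.ofReal (I / l ^ pd))) :=
    fun l hl => modular_tendsto p hpc hp1 hM hpd f hl
  -- a uniform element of the defining set, ensuring nonemptiness
  obtain ⟨C, hC⟩ := schwartz_bound f
  set K : ℝ := max 1 C ^ (M - 1) with hKdef
  have hK0 : 0 ≤ K := Real.rpow_nonneg (le_trans zero_le_one (le_max_left _ _)) _
  set l₀ : ℝ := max 1 (K * ∫ x : ℝ, ‖f x‖) with hl₀def
  have hl₀1 : 1 ≤ l₀ := le_max_left _ _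
  have hl₀pos : 0 < l₀ := lt_of_lt_of_le one_pos hl₀1
  have hmem : ∀ h : ℝ, l₀ ∈ {l : ℝ | 0 < l ∧
      modular p (fun x => f (x - h) / (l : ℂ)) ≤ 1} := by
    intro h
    refine ⟨hl₀pos, ?_⟩
    rw [modular_shift]
    have hle : ∀ x : ℝ, ‖f x / (l₀ : ℂ)‖ ^ p (x + h) ≤ K * ‖f x‖ / l₀ := by
      intro x
      rw [norm_div_real _ hl₀pos]
      have h1 : (‖f x‖ / l₀) ^ p (x + h) ≤ K * (‖f x‖ / l₀) := by
        refine aux_rpow_le (by positivity) ?_ (hp1 _) (hM _)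
        calc ‖f x‖ / l₀ ≤ ‖f x‖ / 1 := by gcongr <;> first | exact norm_nonneg _ | exact hl₀1 | norm_num
            _ = ‖f x‖ := div_one _
            _ ≤ C := hC x
      calc (‖f x‖ / l₀) ^ p (x + h) ≤ K * (‖f x‖ / l₀) := h1
        _ = K * ‖f x‖ / l₀ := by ring
    calc (∫⁻ x : ℝ, ENNReal.ofReal (‖f x / (l₀ : ℂ)‖ ^ p (x + h)))
        ≤ ∫⁻ x : ℝ, ENNReal.ofReal (K * ‖f x‖ / l₀) :=
          lintegral_mono fun x => ENNReal.ofReal_le_ofReal (hle x)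
      _ = ENNReal.ofReal ((∫ x : ℝ, K * ‖f x‖) / l₀) := by
          rw [← integral_div]
          exact (ofReal_integral_eq_lintegral_ofReal
            ((f.integrable.norm.const_mul K).div_const l₀)
            (Filter.Eventually.of_forall fun x => by positivity)).symm
      _ ≤ 1 := by
          rw [integral_const_mul]
          refine ENNReal.ofReal_le_one.2 ((div_le_one hl₀pos).2 (le_max_right _ _))
  have hbdd : ∀ h : ℝ, BddBelow {l : ℝ | 0 < l ∧
      modular p (fun x => f (x - h) / (l : ℂ)) ≤ 1} :=
    fun h => ⟨0, fun b hb => hb.1.le⟩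
  -- conclude via the order characterization of convergence
  refine tendsto_order.2 ⟨?_, ?_⟩
  · -- lower bound
    intro a ha
    set lam : ℝ := (max a 0 + N) / 2 with hlam
    have hmaxa : max a 0 < N := max_lt ha hNpos
    have hlampos : 0 < lam := by
      have : (0 : ℝ) ≤ max a 0 := le_max_right _ _
      rw [hlam]; linarith
    have hlamN : lam < N := by rw [hlam]; linarith
    have halam : a < lam := by
      have : a ≤ max a 0 := le_max_left _ _
      rw [hlam]; linarith
    have hgt : (1 : ℝ≥0∞) < ENNReal.ofReal (I / lam ^ pd) := by
      rw [ENNReal.one_lt_ofReal]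
      rw [lt_div_iff₀ (Real.rpow_pos_of_pos hlampos _), one_mul, ← hNpd]
      exact Real.rpow_lt_rpow hlampos.le hlamN hpd0
    have hev := (key lam hlampos).eventually (eventually_gt_nhds hgt)
    filter_upwards [hev] with h hh
    refine lt_of_lt_of_le halam (le_csInf ⟨l₀, hmem h⟩ ?_)
    intro b hb
    by_contra hcon
    push_neg at hcon
    have := modular_anti p hp1 (fun x => f (x - h)) hb.1 hcon.le
    exact absurd (this.trans hb.2) (not_le.2 hh)
  · -- upper bound
    intro a ha
    set lam : ℝ := (N + a) / 2 with hlam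
    have hlampos : 0 < lam := by rw [hlam]; linarith
    have hNlam : N < lam := by rw [hlam]; linarith
    have hlama : lam < a := by rw [hlam]; linarith
    have hlt : ENNReal.ofReal (I / lam ^ pd) < 1 := by
      rw [ENNReal.ofReal_lt_one]
      rw [div_lt_one (Real.rpow_pos_of_pos hlampos _), ← hNpd]
      exact Real.rpow_lt_rpow hNpos.le hNlam hpd0
    have hev := (key lam hlampos).eventually (eventually_lt_nhds hlt)
    filter_upwards [hev] with h hh
    refine lt_of_le_of_lt (csInf_le (hbdd h) ⟨hlampos, hh.le⟩) hlama
end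

section
/- Let p : ℝ → [1,∞) be a continuous, even function, non-decreasing on ℝ₊ and bounded, with lim_{x→∞} p(x) = p⋄. Then for every nonzero Schwartz function f on ℝ, lim_{h→∞} ∫_ℝ (|f(x)| / ‖f‖_{p⋄})^{p(x+h)} dx = 1, where ‖f‖_{p⋄} is the classical L^{p⋄}(ℝ) norm of f. -/
open MeasureTheory Filter
open scoped ENNReal

theorem stmt3 (p : ℝ → ℝ) (hpc : Continuous p) (hpeven : ∀ x, p (-x) = p x)
    (hpmono : MonotoneOn p (Set.Ici (0 : ℝ))) (hp1 : ∀ x, 1 ≤ p x)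
    (hpbdd : ∃ M : ℝ, ∀ x, p x ≤ M)
    (pd : ℝ) (hpd : Tendsto p atTop (nhds pd))
    (f : SchwartzMap ℝ ℂ) (hf : f ≠ 0) :
    Tendsto
      (fun h : ℝ => ∫ x : ℝ, (‖f x‖ / (∫ y : ℝ, ‖f y‖ ^ pd) ^ (1 / pd)) ^ p (x + h))
      atTop (nhds 1) := by
  obtain ⟨M₀, hM₀⟩ := hpbdd
  set M := max M₀ 1 with hMdef
  have hpM : ∀ x, p x ≤ M := fun x => (hM₀ x).trans (le_max_left _ _)
  have hM1 : (1 : ℝ) ≤ M := le_max_right _ _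
  have hpd1 : (1 : ℝ) ≤ pd := ge_of_tendsto' hpd hp1
  have hpd0 : (0 : ℝ) < pd := lt_of_lt_of_le one_pos hpd1
  -- f is bounded
  obtain ⟨C, hC0, hC⟩ := f.decay 0 0
  have hCbd : ∀ x, ‖f x‖ ≤ C := fun x => by simpa using hC x
  have hfc : Continuous fun x : ℝ => ‖f x‖ := f.continuous.norm
  -- integrability of ‖f‖^q for q ≥ 1
  have hint : ∀ q : ℝ, 1 ≤ q → Integrable (fun x : ℝ => ‖f x‖ ^ q) := by
    intro q hq
    have hq0 : (0 : ℝ) < q := lt_of_lt_of_le one_pos hq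
    have hcont : Continuous fun x : ℝ => ‖f x‖ ^ q :=
      hfc.rpow_const (fun x => Or.inr hq0.le)
    set C' := max C 1 with hC'def
    have hC'1 : (1 : ℝ) ≤ C' := le_max_right _ _
    have hC'0 : (0 : ℝ) < C' := lt_of_lt_of_le one_pos hC'1
    refine Integrable.mono' ((f.integrable.norm).const_mul (C' ^ (q - 1)))
      hcont.aestronglyMeasurable (Filter.Eventually.of_forall fun x => ?_)
    rw [Real.norm_eq_abs, abs_of_nonneg (Real.rpow_nonneg (norm_nonneg _) _)]
    rcases eq_or_lt_of_le (norm_nonneg (f x)) with h0 | h0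
    · rw [← h0, Real.zero_rpow (ne_of_gt hq0)]
      positivity
    · have key : ‖f x‖ ^ q = ‖f x‖ ^ (q - 1) * ‖f x‖ := by
        rw [show q = q - 1 + 1 by ring, Real.rpow_add h0, Real.rpow_one]
        ring_nf
      rw [key]
      have h1 : ‖f x‖ ^ (q - 1) ≤ C' ^ (q - 1) :=
        Real.rpow_le_rpow (norm_nonneg _) ((hCbd x).trans (le_max_left _ _)) (by linarith)
      exact mul_le_mul h1 le_rfl (norm_nonneg _) (by positivity)
  set I := ∫ y : ℝ, ‖f y‖ ^ pd with hIdef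
  have hIint : Integrable (fun x : ℝ => ‖f x‖ ^ pd) := hint pd hpd1
  have hI : 0 < I := by
    rw [hIdef]
    rw [integral_pos_iff_support_of_nonneg_ae
      (Filter.Eventually.of_forall fun x => Real.rpow_nonneg (norm_nonneg _) _) hIint]
    have hopen : IsOpen (Function.support fun x : ℝ => ‖f x‖ ^ pd) := by
      have : Continuous fun x : ℝ => ‖f x‖ ^ pd := hfc.rpow_const (fun x => Or.inr hpd0.le)
      exact this.isOpen_support
    have hne : (Function.support fun x : ℝ => ‖f x‖ ^ pd).Nonempty := by
      by_contra hempty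
      apply hf
      ext x
      have hx : (fun x : ℝ => ‖f x‖ ^ pd) x = 0 := by
        by_contra hx
        exact hempty ⟨x, hx⟩
      simp only at hx
      have : ‖f x‖ = 0 := by
        by_contra hfx
        have : (0:ℝ) < ‖f x‖ := lt_of_le_of_ne (norm_nonneg _) (Ne.symm hfx)
        exact absurd hx (ne_of_gt (Real.rpow_pos_of_pos this _))
      simpa using this
    exact hopen.measure_pos volume hne
  set N := I ^ (1 / pd) with hNdef
  have hN : 0 < N := Real.rpow_pos_of_pos hI _
  have hNpd : N ^ pd = I := by
    rw [hNdef, ← Real.rpow_mul hI.le, one_div, inv_mul_cancel₀ hpd0.ne', Real.rpow_one]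
  -- dominating function
  set g : ℝ → ℝ := fun x => ‖f x‖ / N + (‖f x‖ / N) ^ M with hgdef
  have hgint : Integrable g := by
    have h1 : Integrable fun x : ℝ => ‖f x‖ / N := (f.integrable.norm).div_const N
    have h2 : Integrable fun x : ℝ => (‖f x‖ / N) ^ M := by
      have : (fun x : ℝ => (‖f x‖ / N) ^ M) = fun x : ℝ => ‖f x‖ ^ M / N ^ M := by
        funext x
        rw [Real.div_rpow (norm_nonneg _) hN.le]
      rw [this]
      exact (hint M hM1).div_const _
    exact h1.add h2
  have key : Tendsto (fun h : ℝ => ∫ x : ℝ, (‖f x‖ / N) ^ p (x + h)) atTop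
      (nhds (∫ x : ℝ, (‖f x‖ / N) ^ pd)) := by
    apply tendsto_integral_filter_of_dominated_convergence g
    · refine Filter.Eventually.of_forall fun h => ?_
      have : Continuous fun x : ℝ => (‖f x‖ / N) ^ p (x + h) := by
        apply Continuous.rpow (hfc.div_const N) (hpc.comp (continuous_id.add continuous_const))
        intro x
        exact Or.inr (lt_of_lt_of_le one_pos (hp1 _))
      exact this.aestronglyMeasurable
    · refine Filter.Eventually.of_forall fun h => Filter.Eventually.of_forall fun x => ?_
      have ha : (0:ℝ) ≤ ‖f x‖ / N := div_nonneg (norm_nonneg _) hN.le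
      rw [Real.norm_eq_abs, abs_of_nonneg (Real.rpow_nonneg ha _)]
      rcases eq_or_lt_of_le ha with h0 | h0
      · rw [← h0, Real.zero_rpow (by linarith [hp1 (x + h)] : p (x + h) ≠ 0)]
        simp only [hgdef]
        positivity
      · rcases le_or_gt (‖f x‖ / N) 1 with hle | hgt
        · have : (‖f x‖ / N) ^ p (x + h) ≤ (‖f x‖ / N) ^ (1:ℝ) :=
            Real.rpow_le_rpow_of_exponent_ge h0 hle (hp1 _)
          rw [Real.rpow_one] at this
          have h2 : (0:ℝ) ≤ (‖f x‖ / N) ^ M := Real.rpow_nonneg ha _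
          simp only [hgdef]
          linarith
        · have : (‖f x‖ / N) ^ p (x + h) ≤ (‖f x‖ / N) ^ M :=
            Real.rpow_le_rpow_of_exponent_le hgt.le (hpM _)
          simp only [hgdef]
          linarith
    · exact hgint
    · refine Filter.Eventually.of_forall fun x => ?_
      have hcomp : Tendsto (fun h : ℝ => p (x + h)) atTop (nhds pd) :=
        hpd.comp (tendsto_atTop_add_const_left _ x tendsto_id)
      rcases eq_or_lt_of_le (div_nonneg (norm_nonneg (f x)) hN.le) with h0 | h0
      · have heq : ∀ h : ℝ, (‖f x‖ / N) ^ p (x + h) = 0 := fun h => by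
          rw [← h0, Real.zero_rpow (by linarith [hp1 (x + h)] : p (x + h) ≠ 0)]
        rw [show (‖f x‖ / N) ^ pd = 0 by rw [← h0, Real.zero_rpow hpd0.ne']]
        have : Tendsto (fun _ : ℝ => (0:ℝ)) atTop (nhds 0) := tendsto_const_nhds
        simpa only [heq] using this
      · exact Filter.Tendsto.rpow tendsto_const_nhds hcomp (Or.inl h0.ne')
  have hone : (∫ x : ℝ, (‖f x‖ / N) ^ pd) = 1 := by
    have : (fun x : ℝ => (‖f x‖ / N) ^ pd) = fun x : ℝ => ‖f x‖ ^ pd * I⁻¹ := by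
      funext x
      rw [Real.div_rpow (norm_nonneg _) hN.le, hNpd, div_eq_mul_inv]
    rw [this, integral_mul_const, ← hIdef, mul_inv_cancel₀ hI.ne']
  rw [← hone]
  exact key
end

section
/- Let q : ℝ → [1,∞] be log-Hölder continuous and let s ∈ [1,2] be a constant. If there is a constant C > 0 such that ‖ĝ‖_{q(·)} ≤ C‖g‖_{L^s(ℝ)} for every Schwartz function g on ℝ, then q(0) ≤ s', where 1/s + 1/s' = 1. (The proof scales a fixed Schwartz function f with f̂ ≥ 1 on [−1,1] via f_λ(x) = λ f(λx), noting ‖f_λ‖_{L^s} = λ^{1/s'}‖f‖_{L^s}, and shows lim inf_{λ→0⁺} λ^{−1/q(0)} ‖f̂_λ‖_{q(·)} > 0 when q(0) < ∞.) -/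
open MeasureTheory Filter
open scoped ENNReal FourierTransform

open Topology
open scoped SchwartzMap

/-!
Suppose `q 0 > s'` and pick `s' < r < q 0`. Log-Hölder continuity makes `q` lower
semicontinuous, so `q ≥ r` near `0`. Fix a Schwartz function `φ` with `|φ̂| ≥ c` on `(-a, a)` and
test the inequality on `φ_l x = l φ (l x)`, whose Fourier transform is `ξ ↦ φ̂ (ξ / l)`: the
right-hand side is `C ‖φ‖_s l^{1/s'}`, while `|φ̂_l| ≥ c` on an interval of length `2al` forces
`‖φ̂_l‖_{q(·)} ≥ min (c, c (2al)^{1/r})`. As `1/r < 1/s'`, this fails for small `l`.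
-/

lemma tendsto_div_neg_log_abs_sub (C x₀ : ℝ) :
    Tendsto (fun x => C / -Real.log |x₀ - x|) (𝓝[≠] x₀) (𝓝 0) := by
  have h : Tendsto (fun x => x₀ - x) (𝓝[≠] x₀) (𝓝[≠] 0) := by
    refine tendsto_nhdsWithin_of_tendsto_nhds_of_eventually_within _ ?_ ?_
    · exact tendsto_nhdsWithin_of_tendsto_nhds (by simpa using (continuous_sub_left x₀).tendsto x₀)
    · filter_upwards [self_mem_nhdsWithin] with x hx
      exact sub_ne_zero.2 (Ne.symm hx)
  have hlog : Tendsto (fun x => Real.log |x₀ - x|) (𝓝[≠] x₀) atBot := by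
    simpa only [Function.comp_def, Real.log_abs] using Real.tendsto_log_nhdsNE_zero.comp h
  exact tendsto_const_nhds.div_atTop (tendsto_neg_atBot_atTop.comp hlog)

theorem LogHolder.lowerSemicontinuous {q : ℝ → ℝ≥0∞} (hq : LogHolder q) (hq0 : ∀ x, q x ≠ 0) :
    LowerSemicontinuous q := by
  obtain ⟨C, -, hC⟩ := hq
  intro x₀ y hy
  have hsmall {ε : ℝ} (hε : 0 < ε) :
      ∀ᶠ x in 𝓝[≠] x₀, |x₀ - x| < 1 / 2 ∧ C / -Real.log |x₀ - x| < ε := by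
    refine Eventually.and ?_ ((tendsto_div_neg_log_abs_sub C x₀).eventually_lt_const hε)
    refine nhdsWithin_le_nhds ?_
    simpa only [Metric.ball, Real.dist_eq, abs_sub_comm] using
      Metric.ball_mem_nhds x₀ (one_half_pos (α := ℝ))
  rw [← nhdsNE_sup_pure, eventually_sup, eventually_pure]
  refine ⟨?_, hy⟩
  have hy_top : y ≠ ∞ := hy.ne_top
  by_cases hx₀ : q x₀ = ∞
  · filter_upwards [hsmall (inv_pos.2 (by positivity : 0 < y.toReal + 1))] with x ⟨hx, hxC⟩
    by_cases hx_top : q x = ∞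
    · simpa [hx_top, lt_top_iff_ne_top] using hy_top
    have h := ((hC x₀ x hx).2 hx₀).trans_lt hxC
    rw [ENNReal.toReal_inv, inv_lt_inv₀ (ENNReal.toReal_pos (hq0 x) hx_top) (by positivity)] at h
    exact ((ENNReal.lt_ofReal_iff_toReal_lt hy_top).2 (by linarith)).trans_le
      ENNReal.ofReal_toReal_le
  · have hε : 0 < (q x₀).toReal - y.toReal := by
      linarith [ENNReal.toReal_strict_mono hx₀ hy]
    filter_upwards [hsmall hε] with x ⟨hx, hxC⟩
    by_cases hx_top : q x = ∞
    · simpa [hx_top, lt_top_iff_ne_top] using hy_top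
    have h := (abs_lt.1 (((hC x₀ x hx).1 hx₀ hx_top).trans_lt hxC)).2
    exact (ENNReal.toReal_lt_toReal hy_top hx_top).1 (by linarith)

lemma le_modularE_of_le_norm {q : ℝ → ℝ≥0∞} {g : ℝ → ℂ} {S : Set ℝ} (hS : MeasurableSet S)
    {B r : ℝ} (hB : 1 < B) (hg : ∀ x ∈ S, B ≤ ‖g x‖) (hq : ∀ x ∈ S, ENNReal.ofReal r ≤ q x) :
    ENNReal.ofReal (B ^ r) * volume S ≤ modularE q g := by
  rw [← setLIntegral_const]
  refine (setLIntegral_mono' hS fun x hx => ?_).trans (setLIntegral_le_lintegral _ _)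
  split_ifs with hqx hgx
  · linarith [hg x hx]
  · exact le_top
  · refine ENNReal.ofReal_le_ofReal ?_
    calc B ^ r ≤ B ^ (q x).toReal :=
          Real.rpow_le_rpow_of_exponent_le hB.le
            ((ENNReal.ofReal_le_iff_le_toReal hqx).1 (hq x hx))
      _ ≤ ‖g x‖ ^ (q x).toReal := Real.rpow_le_rpow (by linarith) (hg x hx) ENNReal.toReal_nonneg

lemma ofReal_min_le_varNormE {q : ℝ → ℝ≥0∞} {g : ℝ → ℂ} {S : Set ℝ} (hS : MeasurableSet S)
    {b r : ℝ} (hb : 0 < b) (hr : 0 < r) (hg : ∀ x ∈ S, b ≤ ‖g x‖)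
    (hq : ∀ x ∈ S, ENNReal.ofReal r ≤ q x) :
    ENNReal.ofReal (min b (b * (volume S).toReal ^ r⁻¹)) ≤ varNormE q g := by
  refine le_sInf ?_
  rintro _ ⟨u, hu, rfl, hmod⟩
  rw [ENNReal.ofReal_le_ofReal_iff hu.le]
  by_contra! hlt
  obtain ⟨hub, huS⟩ := lt_min_iff.1 hlt
  have hB : 1 < b / u := (one_lt_div hu).2 hub
  have hgu : ∀ x ∈ S, b / u ≤ ‖g x / u‖ := fun x hx => by
    rw [norm_div, Complex.norm_real, Real.norm_of_nonneg hu.le]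
    exact div_le_div_of_nonneg_right (hg x hx) hu.le
  have hmeas : ENNReal.ofReal ((b / u) ^ r) * volume S ≤ 1 :=
    (le_modularE_of_le_norm hS hB hgu hq).trans hmod
  set m := (volume S).toReal
  have hm : 0 < m := by
    by_contra! hm
    rw [le_antisymm hm ENNReal.toReal_nonneg, Real.zero_rpow (inv_ne_zero hr.ne'),
      mul_zero] at huS
    exact huS.not_gt hu
  have hS_top : volume S ≠ ∞ := fun h => by simp [m, h] at hm
  rw [← ENNReal.ofReal_toReal hS_top, ← ENNReal.ofReal_mul (by positivity),
    ENNReal.ofReal_le_one] at hmeas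
  have hpow : u ^ r < b ^ r * m := by
    calc u ^ r < (b * m ^ r⁻¹) ^ r := Real.rpow_lt_rpow hu.le huS hr
      _ = b ^ r * m := by
        rw [Real.mul_rpow hb.le (by positivity), ← Real.rpow_mul hm.le, inv_mul_cancel₀ hr.ne',
          Real.rpow_one]
  rw [Real.div_rpow hb.le hu.le, div_mul_eq_mul_div, div_le_one (by positivity)] at hmeas
  linarith

lemma fourier_dilation {E : Type*} [NormedAddCommGroup E] [NormedSpace ℂ E] (f : ℝ → E) {l : ℝ}
    (hl : 0 < l) (ξ : ℝ) : 𝓕 (fun x => l • f (l * x)) ξ = 𝓕 f (l⁻¹ * ξ) := by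
  simp only [Real.fourier_real_eq]
  calc ∫ v, 𝐞 (-(v * ξ)) • l • f (l * v)
      = l • ∫ v, 𝐞 (-(l * v * (l⁻¹ * ξ))) • f (l * v) := by
        rw [← integral_smul]
        congr 1 with v
        rw [smul_comm, mul_mul_mul_comm, mul_inv_cancel₀ hl.ne', one_mul]
    _ = ∫ v, 𝐞 (-(v * (l⁻¹ * ξ))) • f v := by
        rw [Measure.integral_comp_mul_left (fun v => 𝐞 (-(v * (l⁻¹ * ξ))) • f v), smul_smul,
          abs_of_pos (inv_pos.2 hl), mul_inv_cancel₀ hl.ne', one_smul]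

lemma eLpNorm_dilation {E : Type*} [NormedAddCommGroup E] [NormedSpace ℝ E] (f : ℝ → E) {l : ℝ}
    (hl : 0 < l) {p : ℝ≥0∞} (hp : p ≠ ∞) :
    eLpNorm (fun x => l • f (l * x)) p volume =
      ENNReal.ofReal (l ^ (1 - p.toReal⁻¹)) * eLpNorm f p volume := by
  have hemb : MeasurableEmbedding (l * ·) := (Homeomorph.mulLeft₀ l hl.ne').measurableEmbedding
  have hfun : (fun x => l • f (l * x)) = l • (f ∘ (l * ·)) := rfl
  rw [hfun, eLpNorm_const_smul, ← hemb.eLpNorm_map_measure, Real.map_volume_mul_left hl.ne',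
    eLpNorm_smul_measure_of_ne_top hp, smul_eq_mul, ← mul_assoc]
  congr 1
  rw [Real.enorm_of_nonneg hl.le, abs_of_pos (inv_pos.2 hl), one_div, ENNReal.toReal_inv,
    ENNReal.ofReal_rpow_of_pos (inv_pos.2 hl), ← ENNReal.ofReal_mul hl.le, Real.rpow_sub hl,
    Real.rpow_one, Real.inv_rpow hl.le, div_eq_mul_inv]

lemma exists_schwartzMap_eq_dilation (φ : 𝓢(ℝ, ℂ)) {l : ℝ} (hl : l ≠ 0) :
    ∃ g : 𝓢(ℝ, ℂ), ⇑g = fun x => l • φ (l * x) :=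
  ⟨l • SchwartzMap.compCLMOfContinuousLinearEquiv ℝ
    (LinearEquiv.smulOfNeZero ℝ ℝ l hl).toContinuousLinearEquiv φ, rfl⟩

lemma exists_schwartzMap_norm_fourier_ge :
    ∃ φ : 𝓢(ℝ, ℂ), ∃ a > 0, ∃ c > 0, ∀ ξ ∈ Metric.ball (0 : ℝ) a, c ≤ ‖𝓕 ⇑φ ξ‖ := by
  let b : ContDiffBump (0 : ℝ) := ⟨1, 2, one_pos, one_lt_two⟩
  let φ : 𝓢(ℝ, ℂ) := (b.hasCompactSupport.comp_left Complex.ofReal_zero).toSchwartzMap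
    (Complex.ofRealCLM.contDiff.comp b.contDiff)
  have hφ0 : 𝓕 ⇑φ 0 = ((∫ x, b x : ℝ) : ℂ) := by
    rw [Real.fourier_real_eq, ← integral_complex_ofReal]
    simp only [mul_zero, neg_zero, AddChar.map_zero_eq_one, one_smul]
    rfl
  have hpos : 0 < ‖𝓕 ⇑φ 0‖ := by
    rw [hφ0, Complex.norm_real, Real.norm_of_nonneg b.integral_pos.le]
    exact b.integral_pos
  have hcont : Continuous (𝓕 ⇑φ) := by
    rw [← SchwartzMap.fourier_coe]
    exact (𝓕 φ).continuous
  obtain ⟨a, ha, hball⟩ := Metric.eventually_nhds_iff_ball.1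
    ((hcont.norm.tendsto 0).eventually_const_lt (half_lt_self hpos))
  exact ⟨φ, a, ha, _, half_pos hpos, fun ξ hξ => (hball ξ hξ).le⟩

lemma ofReal_min_le_varNormE_fourier_dilation {q : ℝ → ℝ≥0∞} {φ : ℝ → ℂ} {a c r ε l : ℝ}
    (ha : 0 < a) (hc : 0 < c) (hr : 0 < r) (hl : 0 < l) (hal : a * l ≤ ε)
    (hφ : ∀ ξ ∈ Metric.ball (0 : ℝ) a, c ≤ ‖𝓕 φ ξ‖)
    (hq : ∀ x ∈ Metric.ball (0 : ℝ) ε, ENNReal.ofReal r ≤ q x) :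
    ENNReal.ofReal (min c (c * (2 * (a * l)) ^ r⁻¹)) ≤
      varNormE q (𝓕 (fun x => l • φ (l * x))) := by
  have h := ofReal_min_le_varNormE (g := 𝓕 (fun x => l • φ (l * x)))
    (S := Metric.ball 0 (a * l)) measurableSet_ball hc hr
    (fun ξ hξ => ?_) (fun x hx => hq x (Metric.ball_subset_ball hal hx))
  · rwa [Real.volume_ball, ENNReal.toReal_ofReal (by positivity)] at h
  · rw [fourier_dilation φ hl]
    refine hφ _ ?_
    rw [mem_ball_zero_iff] at hξ ⊢
    rwa [norm_mul, norm_inv, Real.norm_of_nonneg hl.le, inv_mul_lt_iff₀ hl, mul_comm]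

lemma varNormE_fourier_dilation_le {q : ℝ → ℝ≥0∞} {s C : ℝ} (hC : 0 ≤ C) (hs : 0 < s)
    (hHY : ∀ g : 𝓢(ℝ, ℂ), varNormE q (𝓕 ⇑g) ≤
      ENNReal.ofReal C * eLpNorm (⇑g) (ENNReal.ofReal s) volume)
    (φ : 𝓢(ℝ, ℂ)) {l : ℝ} (hl : 0 < l) :
    varNormE q (𝓕 (fun x => l • φ (l * x))) ≤
      ENNReal.ofReal (C * (eLpNorm φ (ENNReal.ofReal s) volume).toReal * l ^ (1 - s⁻¹)) := by
  obtain ⟨g, hg⟩ := exists_schwartzMap_eq_dilation φ hl.ne'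
  refine hg ▸ (hHY g).trans_eq ?_
  rw [hg, eLpNorm_dilation _ hl ENNReal.ofReal_ne_top, ENNReal.toReal_ofReal hs.le,
    ENNReal.ofReal_mul (by positivity), ENNReal.ofReal_mul hC, ENNReal.ofReal_toReal
      (φ.eLpNorm_lt_top (ENNReal.ofReal s) volume).ne]
  ring

lemma eventually_mul_rpow_lt_min (D : ℝ) {A B α β : ℝ} (hA : 0 < A) (hB : 0 < B) (hβ : 0 < β)
    (hαβ : α < β) : ∀ᶠ l in 𝓝[>] (0 : ℝ), D * l ^ β < min A (B * l ^ α) := by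
  have htendsto {γ : ℝ} (hγ : 0 < γ) : Tendsto (fun l : ℝ => D * l ^ γ) (𝓝[>] 0) (𝓝 0) := by
    simpa [Real.zero_rpow hγ.ne'] using
      ((Real.continuousAt_rpow_const 0 γ (Or.inr hγ.le)).tendsto.mono_left
        nhdsWithin_le_nhds).const_mul D
  filter_upwards [self_mem_nhdsWithin, (htendsto hβ).eventually_lt_const hA,
    (htendsto (sub_pos.2 hαβ)).eventually_lt_const hB] with l hl hlA hlB
  refine lt_min hlA ?_
  calc D * l ^ β = D * l ^ (β - α) * l ^ α := by
        rw [mul_assoc, ← Real.rpow_add hl, sub_add_cancel]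
    _ < B * l ^ α := mul_lt_mul_of_pos_right hlB (Real.rpow_pos_of_pos hl α)

lemma conjExp_one : conjExp 1 = ∞ := by
  simp [conjExp]

lemma conjExp_ofReal {s : ℝ} (hs : 1 < s) :
    conjExp (ENNReal.ofReal s) = ENNReal.ofReal (1 - s⁻¹)⁻¹ := by
  have hs0 : 0 < s := one_pos.trans hs
  rw [conjExp, ← ENNReal.ofReal_inv_of_pos hs0, ← ENNReal.ofReal_one,
    ← ENNReal.ofReal_sub _ (inv_nonneg.2 hs0.le),
    ← ENNReal.ofReal_inv_of_pos (sub_pos.2 (inv_lt_one_of_one_lt₀ hs))]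

theorem stmt5_general (q : ℝ → ℝ≥0∞) (hq1 : ∀ x, 1 ≤ q x) (hqLH : LogHolder q)
    (s : ℝ) (hs1 : 1 ≤ s)
    (C : ℝ) (hC : 0 < C)
    (hHY : ∀ g : SchwartzMap ℝ ℂ,
      varNormE q (𝓕 ⇑g) ≤
        ENNReal.ofReal C * eLpNorm (⇑g) (ENNReal.ofReal s) volume) :
    q 0 ≤ conjExp (ENNReal.ofReal s) := by
  rcases hs1.eq_or_lt with rfl | hs1
  · simp [conjExp_one]
  rw [conjExp_ofReal hs1]
  by_contra! hlt
  obtain ⟨r, -, hconj_r, hrq⟩ := ENNReal.lt_iff_exists_real_btwn.1 hlt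
  have hβ : 0 < 1 - s⁻¹ := sub_pos.2 (inv_lt_one_of_one_lt₀ hs1)
  have hconj_lt_r : (1 - s⁻¹)⁻¹ < r := (ENNReal.ofReal_lt_ofReal_iff'.1 hconj_r).1
  have hr : 0 < r := (inv_pos.2 hβ).trans hconj_lt_r
  have hrβ : r⁻¹ < 1 - s⁻¹ := (inv_lt_comm₀ hβ hr).1 hconj_lt_r
  obtain ⟨ε, hε, hqε⟩ := Metric.eventually_nhds_iff_ball.1
    (hqLH.lowerSemicontinuous (fun x => (zero_lt_one.trans_le (hq1 x)).ne') 0 _ hrq)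
  obtain ⟨φ, a, ha, c, hc, hφ⟩ := exists_schwartzMap_norm_fourier_ge
  obtain ⟨l, hl : 0 < l, hlε, hsmall⟩ := ((eventually_mem_nhdsWithin (a := (0 : ℝ))).and
    (((eventually_lt_nhds (div_pos hε ha)).filter_mono nhdsWithin_le_nhds).and
      (eventually_mul_rpow_lt_min (C * (eLpNorm φ (ENNReal.ofReal s) volume).toReal) hc
        (mul_pos hc (Real.rpow_pos_of_pos (mul_pos two_pos ha) r⁻¹)) hβ hrβ))).exists
  have hlower := ofReal_min_le_varNormE_fourier_dilation ha hc hr hl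
    ((lt_div_iff₀' ha).1 hlε).le hφ (fun x hx => (hqε x hx).le)
  have hupper := varNormE_fourier_dilation_le hC.le (by linarith) hHY φ hl
  have hineq := (ENNReal.ofReal_le_ofReal_iff (by positivity)).1 (hlower.trans hupper)
  rw [← mul_assoc, Real.mul_rpow (mul_pos two_pos ha).le hl.le, ← mul_assoc] at hineq
  linarith

theorem stmt5 (q : ℝ → ℝ≥0∞) (hq1 : ∀ x, 1 ≤ q x) (hqLH : LogHolder q)
    (s : ℝ) (hs1 : 1 ≤ s) (hs2 : s ≤ 2)
    (C : ℝ) (hC : 0 < C)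
    (hHY : ∀ g : SchwartzMap ℝ ℂ,
      varNormE q (𝓕 ⇑g) ≤
        ENNReal.ofReal C * eLpNorm (⇑g) (ENNReal.ofReal s) volume) :
    q 0 ≤ conjExp (ENNReal.ofReal s) :=
  stmt5_general q hq1 hqLH s hs1 C hC hHY
end

section
/- Let n ≥ 2 and let B be the closed unit ball in ℝⁿ. There is no constant C > 0 such that |𝟙̂_B(ξ)| ≤ C ∫₀^{1/|ξ|} r^{n−1} dr = C n^{−1} |ξ|^{−n} for all ξ ≠ 0; equivalently, sup_{ξ ≠ 0} |ξ|ⁿ |𝟙̂_B(ξ)| = ∞. (Hence the monotonicity hypothesis cannot be dropped from the bound |f̂(ξ)| ≲ ∫₀^{1/|ξ|} r^{n−1} f₀(r) dr for radial f.) -/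
/-!
Write `f = 𝟙_B` and `g = f ⋆ f`, so that `g x = vol (B ∩ (x + B))` and `𝓕 g = (𝓕 f)²`.
If `|ξ|ⁿ |𝓕 f ξ|` were bounded, then `(1 + |ξ|)²ⁿ |𝓕 g ξ|` would be bounded too; as `2n > n + 1`,
the Fourier transform of `g` would have an integrable first moment, and Fourier inversion would make
`g` differentiable. But `g` has a corner at its maximum `0`: moving the second ball by `t` in a
direction `u` uncovers a part of the cap `{x ∈ B | ⟪u, x⟫ ≤ -1/2}` of volume proportional to `t`.
-/

open MeasureTheory Filter
open scoped ENNReal FourierTransform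

open Metric Set Module Topology
open scoped RealInnerProductSpace Pointwise Convolution symmDiff

lemma IsLocalMax.not_differentiableAt_of_le_sub {E : Type*} [NormedAddCommGroup E]
    [NormedSpace ℝ E] {f : E → ℝ} {a u : E} {d : ℝ} (hmax : IsLocalMax f a) (hd : 0 < d)
    (hf : ∀ᶠ t in 𝓝[>] (0 : ℝ), f (a + t • u) ≤ f a - d * t) : ¬ DifferentiableAt ℝ f a := by
  intro hdiff
  have hline := hdiff.hasFDerivAt.hasLineDerivAt u
  rw [hmax.fderiv_eq_zero, zero_apply] at hline
  have hslope : ∀ᶠ t in 𝓝[>] (0 : ℝ), t⁻¹ • (f (a + t • u) - f a) ≤ -d := by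
    filter_upwards [hf, self_mem_nhdsWithin] with t ht (htpos : 0 < t)
    rw [smul_eq_mul, inv_mul_le_iff₀ htpos]
    linarith
  linarith [le_of_tendsto hline.tendsto_slope_zero_right hslope]

section FourierDecay

lemma one_add_norm_pow_mul_norm_le {V E : Type*} [SeminormedAddCommGroup V]
    [SeminormedAddCommGroup E] {φ : V → E} {M C : ℝ} {n : ℕ} (hM : ∀ ξ, ‖φ ξ‖ ≤ M)
    (hC : ∀ ξ, ξ ≠ 0 → ‖ξ‖ ^ n * ‖φ ξ‖ ≤ C) (ξ : V) :
    (1 + ‖ξ‖) ^ n * ‖φ ξ‖ ≤ 2 ^ n * max M C := by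
  rcases le_or_gt ‖ξ‖ 1 with hξ | hξ
  · calc (1 + ‖ξ‖) ^ n * ‖φ ξ‖ ≤ 2 ^ n * M :=
          mul_le_mul (pow_le_pow_left₀ (by positivity) (by linarith) n) (hM ξ) (norm_nonneg _)
            (by positivity)
      _ ≤ 2 ^ n * max M C := by gcongr; exact le_max_left _ _
  · calc (1 + ‖ξ‖) ^ n * ‖φ ξ‖ ≤ (2 * ‖ξ‖) ^ n * ‖φ ξ‖ := by gcongr; linarith
      _ = 2 ^ n * (‖ξ‖ ^ n * ‖φ ξ‖) := by ring
      _ ≤ 2 ^ n * max M C := by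
          gcongr
          exact (hC ξ (by rintro rfl; rw [norm_zero] at hξ; linarith)).trans (le_max_right _ _)

variable {V : Type*} [NormedAddCommGroup V] [InnerProductSpace ℝ V] [FiniteDimensional ℝ V]
  [MeasurableSpace V] [BorelSpace V]

lemma Continuous.differentiable_of_fourier_decay {E : Type*} [NormedAddCommGroup E]
    [NormedSpace ℂ E] [CompleteSpace E] {h : V → E} (hc : Continuous h) (hi : Integrable h)
    {m : ℕ} (hm : finrank ℝ V + 1 < m) {K : ℝ} (hK : ∀ ξ, (1 + ‖ξ‖) ^ m * ‖𝓕 h ξ‖ ≤ K) :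
    Differentiable ℝ h := by
  have hFc : Continuous (𝓕 h) :=
    VectorFourier.fourierIntegral_continuous Real.continuous_fourierChar
      (by exact continuous_inner) hi
  have hdom : Integrable fun ξ : V => K * (1 + ‖ξ‖) ^ (-((m : ℝ) - 1)) := by
    have : (finrank ℝ V : ℝ) + 1 < m := by exact_mod_cast hm
    exact (integrable_one_add_norm (by linarith)).const_mul K
  have hbound : ∀ ξ, (1 + ‖ξ‖) * ‖𝓕 h ξ‖ ≤ K * (1 + ‖ξ‖) ^ (-((m : ℝ) - 1)) := by
    intro ξ
    have hb : 0 < 1 + ‖ξ‖ := by positivity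
    rw [show -((m : ℝ) - 1) = 1 - m by ring, Real.rpow_sub hb, Real.rpow_one, Real.rpow_natCast,
      mul_div_assoc', le_div_iff₀ (by positivity)]
    calc (1 + ‖ξ‖) * ‖𝓕 h ξ‖ * (1 + ‖ξ‖) ^ m = (1 + ‖ξ‖) ^ m * ‖𝓕 h ξ‖ * (1 + ‖ξ‖) := by ring
      _ ≤ K * (1 + ‖ξ‖) := by gcongr; exact hK ξ
  have hmom : Integrable fun ξ => (1 + ‖ξ‖) * ‖𝓕 h ξ‖ :=
    hdom.mono' (by fun_prop) (.of_forall fun ξ => by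
      rw [Real.norm_of_nonneg (by positivity)]; exact hbound ξ)
  have hFi : Integrable (𝓕 h) :=
    hmom.mono' hFc.aestronglyMeasurable (.of_forall fun ξ =>
      le_mul_of_one_le_left (norm_nonneg _) (by linarith [norm_nonneg ξ]))
  have hFm : Integrable fun ξ => ‖ξ‖ * ‖𝓕 h ξ‖ :=
    hmom.mono' (by fun_prop) (.of_forall fun ξ => by
      rw [Real.norm_of_nonneg (by positivity)]
      gcongr; linarith)
  rw [← hc.fourierInv_fourier_eq hi hFi, funext (Real.fourierInv_eq_fourier_neg (𝓕 h))]
  exact (Real.differentiable_fourier hFi hFm).comp differentiable_id.neg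

lemma MeasureTheory.Integrable.differentiable_convolution_self_of_fourier_decay {f : V → ℂ}
    (hf : Integrable f) (hc : Continuous (f ⋆[ContinuousLinearMap.mul ℂ ℂ] f)) {n : ℕ}
    (hn : finrank ℝ V + 1 < 2 * n) {C : ℝ} (hC : ∀ ξ, ξ ≠ 0 → ‖ξ‖ ^ n * ‖𝓕 f ξ‖ ≤ C) :
    Differentiable ℝ (f ⋆[ContinuousLinearMap.mul ℂ ℂ] f) := by
  refine hc.differentiable_of_fourier_decay (hf.integrable_convolution _ hf) hn
    (K := (2 ^ n * max (∫ x, ‖f x‖) C) ^ 2) fun ξ => ?_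
  have hFf := one_add_norm_pow_mul_norm_le
    (fun ξ => VectorFourier.norm_fourierIntegral_le_integral_norm _ _ _ _ _) hC ξ
  rw [Real.fourier_mul_convolution_eq hf hf, norm_mul, pow_mul', ← sq, ← mul_pow]
  exact pow_le_pow_left₀ (by positivity) hFf 2

end FourierDecay

section BallOverlap

variable {V : Type*} [NormedAddCommGroup V] [InnerProductSpace ℝ V]

def ballCap (u : V) : Set V := closedBall 0 1 ∩ {x | ⟪u, x⟫ ≤ -(1 / 2)}

lemma ballCap_subset_closedBall (u : V) : ballCap u ⊆ closedBall 0 1 := inter_subset_left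

lemma ballCap_inter_closedBall_subset_smul (u : V) {r : ℝ} (hr₀ : 0 < r) (hr₁ : r ≤ 1) :
    ballCap u ∩ closedBall 0 r ⊆ r • ballCap u := by
  rintro x ⟨⟨-, hxu⟩, hxr⟩
  rw [mem_smul_set_iff_inv_smul_mem₀ hr₀.ne']
  have hxu : ⟪u, x⟫ ≤ -(1 / 2) := hxu
  refine ⟨?_, ?_⟩
  · rw [mem_closedBall_zero_iff, norm_smul, norm_inv, Real.norm_of_nonneg hr₀.le]
    exact inv_mul_le_one_of_le₀ (mem_closedBall_zero_iff.1 hxr) hr₀.le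
  · show ⟪u, r⁻¹ • x⟫ ≤ -(1 / 2)
    rw [real_inner_smul_right]
    have : 1 ≤ r⁻¹ := (one_le_inv₀ hr₀).2 hr₁
    nlinarith

lemma notMem_closedBall_smul_of_mem_ballCap {u x : V} (hu : ‖u‖ = 1) (hx : x ∈ ballCap u)
    {t : ℝ} (ht₀ : 0 < t) (hxt : 1 - t < ‖x‖ ^ 2) : x ∉ closedBall (t • u) 1 := by
  rw [mem_closedBall_iff_norm, not_le]
  have hxu : ⟪u, x⟫ ≤ -(1 / 2) := hx.2
  have hsq : ‖x - t • u‖ ^ 2 = ‖x‖ ^ 2 - 2 * t * ⟪u, x⟫ + t ^ 2 := by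
    rw [norm_sub_sq_real, real_inner_smul_right, real_inner_comm, norm_smul, hu,
      Real.norm_of_nonneg ht₀.le]
    ring
  nlinarith [norm_nonneg (x - t • u)]

variable [FiniteDimensional ℝ V] [MeasurableSpace V] [BorelSpace V]

lemma measurableSet_ballCap (u : V) : MeasurableSet (ballCap u) :=
  measurableSet_closedBall.inter (measurableSet_le (by fun_prop) measurable_const)

lemma measure_ballCap_ne_top (u : V) : volume (ballCap u) ≠ ∞ :=
  measure_ne_top_of_subset (ballCap_subset_closedBall u) measure_closedBall_lt_top.ne

lemma measureReal_ballCap_pos {u : V} (hu : ‖u‖ = 1) : 0 < volume.real (ballCap u) := by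
  have hsub : ball (-((3 / 4 : ℝ) • u)) (1 / 8) ⊆ ballCap u := by
    intro x hx
    rw [mem_ball, dist_eq_norm, sub_neg_eq_add] at hx
    have hinner : |⟪u, x + (3 / 4 : ℝ) • u⟫| ≤ 1 / 8 :=
      (abs_real_inner_le_norm _ _).trans (by rw [hu, one_mul]; exact hx.le)
    have hx' : ⟪u, x + (3 / 4 : ℝ) • u⟫ = ⟪u, x⟫ + 3 / 4 := by
      rw [inner_add_right, real_inner_smul_right, real_inner_self_eq_norm_sq, hu]; ring
    refine ⟨mem_closedBall_zero_iff.2 ?_, ?_⟩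
    · calc ‖x‖ = ‖(x + (3 / 4 : ℝ) • u) - (3 / 4 : ℝ) • u‖ := by rw [add_sub_cancel_right]
        _ ≤ ‖x + (3 / 4 : ℝ) • u‖ + ‖(3 / 4 : ℝ) • u‖ := norm_sub_le _ _
        _ ≤ 1 := by rw [norm_smul, hu]; norm_num; linarith
    · show ⟪u, x⟫ ≤ -(1 / 2)
      rw [hx'] at hinner
      linarith [(abs_le.1 hinner).2]
  exact ENNReal.toReal_pos
    ((measure_ball_pos volume _ (by norm_num)).trans_le (measure_mono hsub)).ne'
    (measure_ballCap_ne_top u)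

lemma measureReal_ballCap_inter_closedBall_le [Nontrivial V] (u : V) {r : ℝ} (hr₀ : 0 < r)
    (hr₁ : r ≤ 1) : volume.real (ballCap u ∩ closedBall 0 r) ≤ r * volume.real (ballCap u) := by
  have hsmul : volume (r • ballCap u) = ENNReal.ofReal (r ^ finrank ℝ V) * volume (ballCap u) :=
    Measure.addHaar_smul_of_nonneg _ hr₀.le _
  calc volume.real (ballCap u ∩ closedBall 0 r) ≤ volume.real (r • ballCap u) :=
        measureReal_mono (ballCap_inter_closedBall_subset_smul u hr₀ hr₁)
          (by rw [hsmul]; exact ENNReal.mul_ne_top ENNReal.ofReal_ne_top (measure_ballCap_ne_top u))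
    _ = r ^ finrank ℝ V * volume.real (ballCap u) := by
        rw [measureReal_def, hsmul, ENNReal.toReal_mul, ENNReal.toReal_ofReal (by positivity),
          measureReal_def]
    _ ≤ r * volume.real (ballCap u) := by
        gcongr
        exact pow_le_of_le_one hr₀.le hr₁ finrank_pos.ne'

noncomputable def ballOverlap (x : V) : ℝ := volume.real (closedBall (0 : V) 1 ∩ closedBall x 1)

lemma ballOverlap_le_ballOverlap_zero (x : V) : ballOverlap x ≤ ballOverlap (0 : V) := by
  rw [ballOverlap, ballOverlap, inter_self]
  exact measureReal_mono inter_subset_left measure_closedBall_lt_top.ne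

lemma ballOverlap_smul_le [Nontrivial V] {u : V} (hu : ‖u‖ = 1) {t : ℝ} (ht₀ : 0 < t)
    (ht₁ : t ≤ 1) :
    ballOverlap (t • u) ≤ ballOverlap (0 : V) - t / 2 * volume.real (ballCap u) := by
  set S := ballCap u \ closedBall 0 (1 - t / 2)
  have hSB : S ⊆ closedBall 0 1 := sdiff_subset.trans (ballCap_subset_closedBall u)
  have hdisj : Disjoint (closedBall (0 : V) 1 ∩ closedBall (t • u) 1) S := by
    refine disjoint_right.2 fun x hx hx' =>
      notMem_closedBall_smul_of_mem_ballCap hu hx.1 ht₀ ?_ hx'.2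
    have : 1 - t / 2 < ‖x‖ := by simpa using hx.2
    nlinarith
  have hS : t / 2 * volume.real (ballCap u) ≤ volume.real S := by
    have := measureReal_inter_add_sdiff (μ := volume) (s := ballCap u)
      (t := closedBall 0 (1 - t / 2)) measurableSet_closedBall (measure_ballCap_ne_top u)
    have := measureReal_ballCap_inter_closedBall_le u (r := 1 - t / 2) (by linarith) (by linarith)
    linarith
  have hunion : ballOverlap (t • u) + volume.real S ≤ ballOverlap (0 : V) := by
    rw [ballOverlap, ballOverlap, inter_self, ← measureReal_union hdisj
      ((measurableSet_ballCap u).diff measurableSet_closedBall)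
      (measure_ne_top_of_subset inter_subset_left measure_closedBall_lt_top.ne)
      (measure_ne_top_of_subset hSB measure_closedBall_lt_top.ne)]
    exact measureReal_mono (union_subset inter_subset_left hSB) measure_closedBall_lt_top.ne
  linarith

lemma not_differentiableAt_ballOverlap_zero [Nontrivial V] :
    ¬ DifferentiableAt ℝ ballOverlap (0 : V) := by
  obtain ⟨u, hu⟩ := exists_norm_eq V zero_le_one
  refine IsLocalMax.not_differentiableAt_of_le_sub (u := u)
    (.of_forall ballOverlap_le_ballOverlap_zero) (half_pos (measureReal_ballCap_pos hu)) ?_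
  filter_upwards [Ioc_mem_nhdsGT one_pos] with t ht
  rw [zero_add]
  linarith [ballOverlap_smul_le hu ht.1 ht.2]

lemma tendsto_measure_closedBall_symmDiff (x₀ : V) (r : ℝ) :
    Tendsto (fun x => volume (closedBall x r ∆ closedBall x₀ r)) (𝓝 x₀) (𝓝 0) := by
  let τ : C(V, C(V, V)) := ContinuousMap.curry ⟨fun p : V × V => p.2 - p.1, by fun_prop⟩
  have hτ : ∀ x, MeasurePreserving (τ x) volume volume := fun x =>
    measurePreserving_sub_right volume x
  have hpre : ∀ x, τ x ⁻¹' closedBall 0 r = closedBall x r := fun x => by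
    ext y; simp [τ, dist_eq_norm]
  have := tendsto_measure_symmDiff_preimage_nhds_zero (τ.continuous.tendsto x₀)
    (.of_forall hτ) (hτ x₀) measurableSet_closedBall.nullMeasurableSet
    (measure_closedBall_lt_top (x := (0 : V)) (r := r)).ne
  simp only [hpre] at this
  exact this

lemma abs_ballOverlap_sub_le (x y : V) :
    |ballOverlap x - ballOverlap y| ≤ volume.real (closedBall x 1 ∆ closedBall y 1) := by
  let μ := volume.restrict (closedBall (0 : V) 1)
  have hμ : ∀ z : V, ballOverlap z = μ.real (closedBall z 1) := fun z => by
    rw [ballOverlap, measureReal_restrict_apply measurableSet_closedBall, inter_comm]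
  have : IsFiniteMeasure μ := isFiniteMeasure_restrict.2 measure_closedBall_lt_top.ne
  rw [hμ, hμ]
  refine (abs_measureReal_sub_le_measureReal_symmDiff measurableSet_closedBall.nullMeasurableSet
    measurableSet_closedBall.nullMeasurableSet).trans ?_
  exact ENNReal.toReal_mono (measure_symmDiff_ne_top measure_closedBall_lt_top.ne
    measure_closedBall_lt_top.ne) (Measure.restrict_apply_le _ _)

lemma continuous_ballOverlap : Continuous (ballOverlap : V → ℝ) := by
  refine continuous_iff_continuousAt.2 fun x₀ => ?_
  rw [ContinuousAt, tendsto_iff_dist_tendsto_zero]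
  refine squeeze_zero (fun _ => dist_nonneg) (fun x => abs_ballOverlap_sub_le x x₀) ?_
  simpa [Function.comp_def, measureReal_def] using (ENNReal.tendsto_toReal ENNReal.zero_ne_top).comp
    (tendsto_measure_closedBall_symmDiff x₀ 1)

lemma convolution_indicator_closedBall :
    (closedBall (0 : V) 1).indicator (fun _ => (1 : ℂ)) ⋆[ContinuousLinearMap.mul ℂ ℂ]
      (closedBall (0 : V) 1).indicator (fun _ => (1 : ℂ)) = fun x => (ballOverlap x : ℂ) := by
  ext x
  have hmem : ∀ y, x - y ∈ closedBall (0 : V) 1 ↔ y ∈ closedBall x 1 := fun y => by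
    rw [mem_closedBall_zero_iff, mem_closedBall, dist_eq_norm, norm_sub_rev]
  have hpt : (fun y => ContinuousLinearMap.mul ℂ ℂ ((closedBall (0 : V) 1).indicator (fun _ => 1) y)
      ((closedBall (0 : V) 1).indicator (fun _ => 1) (x - y))) =
      (closedBall (0 : V) 1 ∩ closedBall x 1).indicator (fun _ => (1 : ℂ)) := by
    ext y
    by_cases h₀ : y ∈ closedBall (0 : V) 1 <;> by_cases hx : y ∈ closedBall x 1 <;>
      simp [h₀, hx, hmem]
  rw [convolution_def, hpt,
    integral_indicator_const _ (measurableSet_closedBall.inter measurableSet_closedBall)]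
  simp [ballOverlap]

end BallOverlap

theorem stmt7 (n : ℕ) (hn : 2 ≤ n) :
    ∀ C : ℝ, ∃ ξ : EuclideanSpace ℝ (Fin n), ξ ≠ 0 ∧
      C < ‖ξ‖ ^ n *
        ‖𝓕 (Set.indicator (Metric.closedBall (0 : EuclideanSpace ℝ (Fin n)) 1)
            (fun _ => (1 : ℂ))) ξ‖ := by
  intro C
  by_contra! hC
  have hdim : finrank ℝ (EuclideanSpace ℝ (Fin n)) = n := finrank_euclideanSpace_fin
  have : Nontrivial (EuclideanSpace ℝ (Fin n)) := nontrivial_of_finrank_pos (by rw [hdim]; omega)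
  have hf : Integrable ((closedBall (0 : EuclideanSpace ℝ (Fin n)) 1).indicator fun _ => (1 : ℂ)) :=
    (integrable_indicator_iff measurableSet_closedBall).2
      (integrableOn_const measure_closedBall_lt_top.ne)
  have hg := hf.differentiable_convolution_self_of_fourier_decay
    (by rw [convolution_indicator_closedBall]
        exact Complex.continuous_ofReal.comp continuous_ballOverlap) (by rw [hdim]; omega) hC
  rw [convolution_indicator_closedBall] at hg
  exact not_differentiableAt_ballOverlap_zero
    ((Complex.reCLM.differentiable.comp hg 0).congr_of_eventuallyEq (.of_forall fun x => by simp))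
end

section
/- Let n ∈ ℕ and 0 ≤ α < n. There exist constants c > 0 and δ > 0, depending only on n and α, such that for every r > 0 the function f(x) = |x|^{−α} 𝟙_{|x| ≤ r} on ℝⁿ (which is integrable) satisfies Re f̂(ξ) ≥ c r^{n−α} for all ξ with |ξ| ≤ δ/r. -/
open MeasureTheory Filter
open scoped ENNReal FourierTransform

open Metric Real Module
open scoped RealInnerProductSpace

/- For `‖x‖ ≤ r` and `‖ξ‖ ≤ 1 / (6 r)` the phase `2π⟪x, ξ⟫` lies in `[-π/3, π/3]`, so the real part
`cos (2π⟪x, ξ⟫) ‖x‖ ^ (-α)` of the Fourier integrand is at least `r ^ (-α) / 2` on the ball (away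
from the origin). Integrating over the ball gives `Re f̂(ξ) ≥ r ^ (-α) vol(B_r) / 2
= vol(B_1) r ^ (n - α) / 2`. The condition `α < n` is what makes `‖x‖ ^ (-α)` integrable at `0`. -/

lemma Real.one_half_le_cos_of_abs_le {x : ℝ} (hx : |x| ≤ π / 3) : 1 / 2 ≤ cos x := by
  rw [← cos_abs, ← cos_pi_div_three]
  exact cos_le_cos_of_nonneg_of_le_pi (abs_nonneg x) (by linarith [pi_pos]) hx

section

variable {V : Type*} [NormedAddCommGroup V] [InnerProductSpace ℝ V] [MeasurableSpace V]
  [BorelSpace V]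

lemma Real.re_fourier_ofReal [FiniteDimensional ℝ V] {g : V → ℝ} (hg : Integrable g) (ξ : V) :
    (𝓕 (fun v ↦ (g v : ℂ)) ξ).re = ∫ v, cos (2 * π * ⟪v, ξ⟫) * g v := by
  have hint : Integrable fun v ↦ 𝐞 (-⟪v, ξ⟫) • (g v : ℂ) :=
    (Real.fourierIntegral_convergent_iff ξ).2 hg.ofReal
  refine (integral_re hint).symm.trans ?_
  congr 1 with v
  rw [Circle.smul_def, Real.fourierChar_apply, smul_eq_mul, RCLike.re_to_complex,
    Complex.re_mul_ofReal, Complex.exp_ofReal_mul_I_re, mul_neg, cos_neg]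

lemma setIntegral_div_two_le_setIntegral_cos_inner_mul {μ : Measure V} {s : Set V} {g : V → ℝ}
    {ξ : V} (hs : MeasurableSet s) (hg : IntegrableOn g s μ) (hg0 : ∀ x ∈ s, 0 ≤ g x)
    (hξ : ∀ x ∈ s, |⟪x, ξ⟫| ≤ 1 / 6) :
    (∫ x in s, g x ∂μ) / 2 ≤ ∫ x in s, cos (2 * π * ⟪x, ξ⟫) * g x ∂μ := by
  have hcos : Continuous fun x : V ↦ cos (2 * π * ⟪x, ξ⟫) := by fun_prop
  rw [← integral_div]
  refine setIntegral_mono_on (hg.div_const 2)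
    (hg.bdd_mul hcos.aestronglyMeasurable (c := 1) (Eventually.of_forall fun x ↦ abs_cos_le_one _))
    hs fun x hx ↦ ?_
  have hphase : |2 * π * ⟪x, ξ⟫| ≤ π / 3 := by
    rw [abs_mul, abs_of_pos two_pi_pos]
    linarith [mul_le_mul_of_nonneg_left (hξ x hx) two_pi_pos.le]
  linarith [mul_le_mul_of_nonneg_right (one_half_le_cos_of_abs_le hphase) (hg0 x hx)]

end

section

variable {E : Type*} [NormedAddCommGroup E] [NormedSpace ℝ E] [FiniteDimensional ℝ E]
  [MeasurableSpace E] [BorelSpace E] {μ : Measure E} [μ.IsAddHaarMeasure]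

lemma integrableOn_closedBall_norm_rpow_neg (hd : 1 ≤ finrank ℝ E) {α : ℝ}
    (hα : α < finrank ℝ E) (r : ℝ) :
    IntegrableOn (fun x : E ↦ ‖x‖ ^ (-α)) (closedBall 0 r) μ :=
  (locallyIntegrable_of_norm_le_rpow (C := 1) hd hα
    (Eventually.of_forall fun x ↦ by simp [abs_of_nonneg (rpow_nonneg (norm_nonneg x) _)])
    (measurable_norm.pow_const _).aestronglyMeasurable).integrableOn_isCompact
      (isCompact_closedBall 0 r)

lemma rpow_neg_mul_measureReal_closedBall_le_setIntegral (hd : 1 ≤ finrank ℝ E) {α : ℝ}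
    (hα0 : 0 ≤ α) (hα : α < finrank ℝ E) (r : ℝ) :
    r ^ (-α) * μ.real (closedBall 0 r) ≤ ∫ x in closedBall (0 : E) r, ‖x‖ ^ (-α) ∂μ := by
  have : Nontrivial E := nontrivial_of_finrank_pos (R := ℝ) hd
  rw [mul_comm, ← smul_eq_mul, ← setIntegral_const]
  refine setIntegral_mono_ae_restrict (integrableOn_const measure_closedBall_lt_top.ne)
    (integrableOn_closedBall_norm_rpow_neg hd hα r) ?_
  filter_upwards [ae_restrict_mem measurableSet_closedBall,
    ae_restrict_of_ae ((Set.countable_singleton (0 : E)).ae_notMem μ)] with x hxr hx0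
  have hx : 0 < ‖x‖ := norm_pos_iff.2 hx0
  exact rpow_le_rpow_of_nonpos hx (mem_closedBall_zero_iff.1 hxr) (neg_nonpos.2 hα0)

end

section

variable {E : Type*} [NormedAddCommGroup E] [InnerProductSpace ℝ E] [FiniteDimensional ℝ E]
  [MeasurableSpace E] [BorelSpace E]

lemma integrable_indicator_closedBall_norm_rpow_neg (hd : 1 ≤ finrank ℝ E) {α : ℝ}
    (hα : α < finrank ℝ E) (r : ℝ) :
    Integrable ((closedBall (0 : E) r).indicator fun x ↦ ((‖x‖ ^ (-α) : ℝ) : ℂ)) :=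
  (integrable_indicator_iff measurableSet_closedBall).2
    (integrableOn_closedBall_norm_rpow_neg hd hα r).ofReal

lemma le_re_fourier_indicator_closedBall_norm_rpow_neg {α : ℝ} (hα0 : 0 ≤ α)
    (hα : α < finrank ℝ E) {r : ℝ} (hr : 0 < r) {ξ : E} (hξ : ‖ξ‖ ≤ 1 / 6 / r) :
    volume.real (ball (0 : E) 1) / 2 * r ^ ((finrank ℝ E : ℝ) - α) ≤
      (𝓕 ((closedBall (0 : E) r).indicator fun x ↦ ((‖x‖ ^ (-α) : ℝ) : ℂ)) ξ).re := by
  have hd : 1 ≤ finrank ℝ E := by exact_mod_cast hα0.trans_lt hα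
  have hg := integrableOn_closedBall_norm_rpow_neg (μ := volume) hd hα r
  have hcast : (closedBall (0 : E) r).indicator (fun x ↦ ((‖x‖ ^ (-α) : ℝ) : ℂ)) =
      fun x ↦ (((closedBall 0 r).indicator (fun x ↦ ‖x‖ ^ (-α)) x : ℝ) : ℂ) :=
    Set.indicator_comp_of_zero Complex.ofReal_zero
  rw [hcast, Real.re_fourier_ofReal (hg.integrable_indicator measurableSet_closedBall)]
  have hinner : ∀ x ∈ closedBall (0 : E) r, |⟪x, ξ⟫| ≤ 1 / 6 := fun x hx ↦
    calc |⟪x, ξ⟫| ≤ ‖x‖ * ‖ξ‖ := abs_real_inner_le_norm x ξ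
      _ ≤ r * (1 / 6 / r) := mul_le_mul (mem_closedBall_zero_iff.1 hx) hξ (norm_nonneg ξ) hr.le
      _ = 1 / 6 := by field_simp
  calc volume.real (ball (0 : E) 1) / 2 * r ^ ((finrank ℝ E : ℝ) - α)
      = r ^ (-α) * volume.real (closedBall (0 : E) r) / 2 := by
        rw [Measure.addHaar_real_closedBall _ _ hr.le, rpow_sub hr, rpow_neg hr.le, rpow_natCast]
        field_simp
    _ ≤ (∫ x in closedBall (0 : E) r, ‖x‖ ^ (-α)) / 2 := by
        gcongr; exact rpow_neg_mul_measureReal_closedBall_le_setIntegral hd hα0 hα r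
    _ ≤ ∫ x in closedBall (0 : E) r, cos (2 * π * ⟪x, ξ⟫) * ‖x‖ ^ (-α) :=
        setIntegral_div_two_le_setIntegral_cos_inner_mul measurableSet_closedBall hg
          (fun x _ ↦ by positivity) hinner
    _ = ∫ x, cos (2 * π * ⟪x, ξ⟫) * (closedBall 0 r).indicator (fun x ↦ ‖x‖ ^ (-α)) x := by
        rw [← integral_indicator measurableSet_closedBall]
        simp only [Set.indicator_mul_right]

end

theorem stmt8_general (n : ℕ) (α : ℝ) (hα0 : 0 ≤ α) (hαn : α < n) :
    ∃ c : ℝ, 0 < c ∧ ∃ δ : ℝ, 0 < δ ∧ ∀ r : ℝ, 0 < r →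
      Integrable
        (Set.indicator (Metric.closedBall (0 : EuclideanSpace ℝ (Fin n)) r)
          (fun x => ((‖x‖ ^ (-α) : ℝ) : ℂ))) ∧
      ∀ ξ : EuclideanSpace ℝ (Fin n), ‖ξ‖ ≤ δ / r →
        c * r ^ ((n : ℝ) - α) ≤
          (𝓕 (Set.indicator (Metric.closedBall (0 : EuclideanSpace ℝ (Fin n)) r)
              (fun x => ((‖x‖ ^ (-α) : ℝ) : ℂ))) ξ).re := by
  have hα : α < finrank ℝ (EuclideanSpace ℝ (Fin n)) := by rwa [finrank_euclideanSpace_fin]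
  have hd : 1 ≤ finrank ℝ (EuclideanSpace ℝ (Fin n)) := by exact_mod_cast hα0.trans_lt hα
  refine ⟨volume.real (ball (0 : EuclideanSpace ℝ (Fin n)) 1) / 2,
    half_pos (ENNReal.toReal_pos (measure_ball_pos _ _ one_pos).ne' measure_ball_lt_top.ne),
    1 / 6, by norm_num, fun r hr ↦
      ⟨integrable_indicator_closedBall_norm_rpow_neg hd hα r, fun ξ hξ ↦ ?_⟩⟩
  simpa only [finrank_euclideanSpace_fin] using
    le_re_fourier_indicator_closedBall_norm_rpow_neg hα0 hα hr hξ

theorem stmt8 (n : ℕ) (hn : 0 < n) (α : ℝ) (hα0 : 0 ≤ α) (hαn : α < n) :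
    ∃ c : ℝ, 0 < c ∧ ∃ δ : ℝ, 0 < δ ∧ ∀ r : ℝ, 0 < r →
      Integrable
        (Set.indicator (Metric.closedBall (0 : EuclideanSpace ℝ (Fin n)) r)
          (fun x => ((‖x‖ ^ (-α) : ℝ) : ℂ))) ∧
      ∀ ξ : EuclideanSpace ℝ (Fin n), ‖ξ‖ ≤ δ / r →
        c * r ^ ((n : ℝ) - α) ≤
          (𝓕 (Set.indicator (Metric.closedBall (0 : EuclideanSpace ℝ (Fin n)) r)
              (fun x => ((‖x‖ ^ (-α) : ℝ) : ℂ))) ξ).re :=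
  stmt8_general n α hα0 hαn
end

section
/- Let n ∈ ℕ, 1 < p < ∞ with conjugate exponent p' = p/(p−1), and (n−1)/2 ≤ α ≤ n−1. Let η be a positive locally integrable function on (0,∞), set Δ(t) = ∫_0^t η(s) ds and u(t) = t^{n−1−α}. Then there is a constant C, depending only on n, p, α, such that for every r > 0: ∫_0^r (∫_0^t u(s) ds)^{p'} η(t) Δ(t)^{−p'} dt ≤ C ∫_0^r Δ(x)^{1−p'} x^{p'(n−α)−1} dx. -/
/-! With `q = p'` and `m = n - α`, the inner integral is `t ^ m / m`, so the left side is
`m ^ (-q) ∫₀ʳ t ^ (q m) η(t) Δ(t) ^ (-q) dt`. Writing `t ^ (q m) = ∫₀ᵗ q m x ^ (q m - 1) dx` and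
exchanging the integrals (a layer-cake formula) reduces everything to the tail estimate
`∫ₓʳ η Δ ^ (-q) ≤ q / (q - 1) · Δ(x) ^ (1 - q)`. This is a second layer-cake computation, now for
`Δ⁻¹` against the measure `η dt`: as `Δ` is continuous and monotone, `{t ∈ (x, r] | Δ t < y}` lies
in an interval `(x, s]` with `Δ s ≤ y`, so its `η`-mass is at most `y - Δ x`. -/

open MeasureTheory Set
open scoped ENNReal

lemma integral_Ioc_zero_rpow {c s : ℝ} (hc : 0 ≤ c) (hs : -1 < s) :
    ∫ x in Ioc 0 c, x ^ s = c ^ (s + 1) / (s + 1) := by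
  rw [← intervalIntegral.integral_of_le hc, integral_rpow (Or.inl hs),
    Real.zero_rpow (by linarith : (0 : ℝ) < s + 1).ne', sub_zero]

lemma setLIntegral_Ioc_zero_ofReal_mul_rpow {c k s : ℝ} (hc : 0 ≤ c) (hk : 0 ≤ k) (hs : -1 < s) :
    ∫⁻ x in Ioc 0 c, ENNReal.ofReal (k * x ^ s) = ENNReal.ofReal (k * (c ^ (s + 1) / (s + 1))) := by
  have hint : IntegrableOn (fun x => k * x ^ s) (Ioc 0 c) :=
    ((intervalIntegral.intervalIntegrable_rpow' hs).const_mul k).1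
  rw [← ofReal_integral_eq_lintegral_ofReal hint
    (ae_restrict_of_forall_mem measurableSet_Ioc fun x (hx : x ∈ Ioc 0 c) => by
      have := hx.1; positivity),
    integral_const_mul, integral_Ioc_zero_rpow hc hs]

lemma rpow_eq_integral_mul_rpow_sub_one {β t : ℝ} (hβ : 0 < β) :
    t ^ β = ∫ x in 0..t, β * x ^ (β - 1) := by
  rw [intervalIntegral.integral_const_mul, integral_rpow (Or.inl (by linarith)),
    sub_add_cancel, Real.zero_rpow hβ.ne', sub_zero]
  field_simp

section Layercake

variable {μ : Measure ℝ} {Δ : ℝ → ℝ} {a b : ℝ}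

lemma measure_Ioc_inter_lt_le (hab : a ≤ b) (hmono : MonotoneOn Δ (Icc a b))
    (hcont : ContinuousOn Δ (Icc a b))
    (hμ : ∀ u ∈ Icc a b, μ (Ioc a u) = ENNReal.ofReal (Δ u - Δ a)) (y : ℝ) :
    μ (Ioc a b ∩ {t | Δ t < y}) ≤ ENNReal.ofReal (y - Δ a) := by
  rcases lt_or_ge (Δ b) y with hby | hyb
  · calc μ (Ioc a b ∩ {t | Δ t < y}) ≤ μ (Ioc a b) := measure_mono inter_subset_left
      _ = ENNReal.ofReal (Δ b - Δ a) := hμ b (right_mem_Icc.2 hab)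
      _ ≤ ENNReal.ofReal (y - Δ a) := ENNReal.ofReal_le_ofReal (by linarith)
  rcases lt_or_ge y (Δ a) with hya | hay
  · have hempty : Ioc a b ∩ {t | Δ t < y} = ∅ := eq_empty_of_forall_notMem fun t ⟨ht, hty⟩ =>
      lt_asymm hya ((hmono (left_mem_Icc.2 hab) (Ioc_subset_Icc_self ht) ht.1.le).trans_lt hty)
    rw [hempty, measure_empty]
    exact zero_le
  obtain ⟨s, hs, hsy⟩ := intermediate_value_Icc hab hcont ⟨hay, hyb⟩
  have hsub : Ioc a b ∩ {t | Δ t < y} ⊆ Ioc a s := fun t ⟨ht, hty⟩ =>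
    ⟨ht.1, not_lt.1 fun hst =>
      (hmono hs (Ioc_subset_Icc_self ht) hst.le).not_gt (hsy ▸ hty)⟩
  calc μ (Ioc a b ∩ {t | Δ t < y}) ≤ μ (Ioc a s) := measure_mono hsub
    _ = ENNReal.ofReal (y - Δ a) := by rw [hμ s hs, hsy]

lemma restrict_Ioc_measure_lt_inv_le (hab : a ≤ b) (hmono : MonotoneOn Δ (Icc a b))
    (hcont : ContinuousOn Δ (Icc a b))
    (hμ : ∀ u ∈ Icc a b, μ (Ioc a u) = ENNReal.ofReal (Δ u - Δ a)) (ha : 0 < Δ a)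
    {y : ℝ} (hy : 0 < y) :
    μ.restrict (Ioc a b) {t | y < (Δ t)⁻¹} ≤ ENNReal.ofReal (y⁻¹ - Δ a) := by
  have hsub : {t | y < (Δ t)⁻¹} ∩ Ioc a b ⊆ Ioc a b ∩ {t | Δ t < y⁻¹} := fun t ⟨hyt, ht⟩ =>
    ⟨ht, (lt_inv_comm₀ hy (ha.trans_le
      (hmono (left_mem_Icc.2 hab) (Ioc_subset_Icc_self ht) ht.1.le))).1 hyt⟩
  rw [Measure.restrict_apply' measurableSet_Ioc]
  exact (measure_mono hsub).trans (measure_Ioc_inter_lt_le hab hmono hcont hμ y⁻¹)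

lemma setLIntegral_rpow_neg_le {q : ℝ} (hq : 1 < q) (hab : a ≤ b)
    (hmono : MonotoneOn Δ (Icc a b)) (hcont : ContinuousOn Δ (Icc a b))
    (hμ : ∀ u ∈ Icc a b, μ (Ioc a u) = ENNReal.ofReal (Δ u - Δ a)) (ha : 0 < Δ a) :
    ∫⁻ t in Ioc a b, ENNReal.ofReal (Δ t ^ (-q)) ∂μ ≤
      ENNReal.ofReal (q / (q - 1) * Δ a ^ (1 - q)) := by
  have hΔpos : ∀ t ∈ Ioc a b, 0 < Δ t := fun t ht =>
    ha.trans_le (hmono (left_mem_Icc.2 hab) (Ioc_subset_Icc_self ht) ht.1.le)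
  have hlayer := lintegral_comp_eq_lintegral_meas_lt_mul (μ.restrict (Ioc a b))
    (f := fun t => (Δ t)⁻¹) (g := fun y => q * y ^ (q - 1))
    (ae_restrict_of_forall_mem measurableSet_Ioc fun t ht => inv_nonneg.2 (hΔpos t ht).le)
    ((hcont.mono Ioc_subset_Icc_self).aemeasurable measurableSet_Ioc).inv
    (fun _ _ => (intervalIntegral.intervalIntegrable_rpow' (by linarith)).const_mul q)
    (ae_restrict_of_forall_mem measurableSet_Ioi fun y (hy : 0 < y) => by positivity)
  have hlevel : ∀ y ∈ Ioi (0 : ℝ), μ.restrict (Ioc a b) {t | y < (Δ t)⁻¹} *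
      ENNReal.ofReal (q * y ^ (q - 1)) ≤
        (Iio (Δ a)⁻¹).indicator (fun y => ENNReal.ofReal (q * y ^ (q - 2))) y := by
    intro y (hy : 0 < y)
    grw [restrict_Ioc_measure_lt_inv_le hab hmono hcont hμ ha hy]
    rw [← ENNReal.ofReal_mul' (by positivity)]
    by_cases hya : y ∈ Iio (Δ a)⁻¹
    · rw [indicator_of_mem hya]
      refine ENNReal.ofReal_le_ofReal ?_
      rw [show q - 2 = (q - 1) + -1 by ring, Real.rpow_add hy, Real.rpow_neg_one]
      have : 0 ≤ q * y ^ (q - 1) := by positivity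
      nlinarith [inv_pos.2 ha]
    · rw [indicator_of_notMem hya, nonpos_iff_eq_zero, ENNReal.ofReal_eq_zero]
      have : y⁻¹ ≤ Δ a := (inv_le_comm₀ ha hy).1 (not_lt.1 hya)
      nlinarith [show 0 ≤ q * y ^ (q - 1) by positivity]
  calc ∫⁻ t in Ioc a b, ENNReal.ofReal (Δ t ^ (-q)) ∂μ
      = ∫⁻ t in Ioc a b, ENNReal.ofReal (∫ y in 0..(Δ t)⁻¹, q * y ^ (q - 1)) ∂μ :=
        setLIntegral_congr_fun measurableSet_Ioc fun t ht => by
          rw [← rpow_eq_integral_mul_rpow_sub_one (by linarith), Real.inv_rpow (hΔpos t ht).le,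
            Real.rpow_neg (hΔpos t ht).le]
    _ = ∫⁻ y in Ioi 0, μ.restrict (Ioc a b) {t | y < (Δ t)⁻¹} *
          ENNReal.ofReal (q * y ^ (q - 1)) := hlayer
    _ ≤ ∫⁻ y in Ioi 0, (Iio (Δ a)⁻¹).indicator (fun y => ENNReal.ofReal (q * y ^ (q - 2))) y :=
        setLIntegral_mono' measurableSet_Ioi hlevel
    _ = ∫⁻ y in Ioc 0 (Δ a)⁻¹, ENNReal.ofReal (q * y ^ (q - 2)) := by
        rw [lintegral_indicator measurableSet_Iio, Measure.restrict_restrict measurableSet_Iio,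
          Iio_inter_Ioi, Measure.restrict_congr_set Ioo_ae_eq_Ioc]
    _ = ENNReal.ofReal (q / (q - 1) * Δ a ^ (1 - q)) := by
        rw [setLIntegral_Ioc_zero_ofReal_mul_rpow (by positivity) (by linarith) (by linarith),
          show q - 2 + 1 = q - 1 by ring, Real.inv_rpow ha.le, ← Real.rpow_neg ha.le]
        congr 1
        rw [neg_sub]
        ring

end Layercake

lemma setLIntegral_rpow_eq_lintegral_measure_Ioc (ν : Measure ℝ) {β : ℝ} (hβ : 0 < β) (r : ℝ) :
    ∫⁻ t in Ioc 0 r, ENNReal.ofReal (t ^ β) ∂ν =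
      ∫⁻ x in Ioc 0 r, ν (Ioc x r) * ENNReal.ofReal (β * x ^ (β - 1)) := by
  have hlayer := lintegral_comp_eq_lintegral_meas_lt_mul (ν.restrict (Ioc 0 r))
    (f := id) (g := fun x => β * x ^ (β - 1))
    (ae_restrict_of_forall_mem measurableSet_Ioc fun t ht => ht.1.le) aemeasurable_id
    (fun _ _ => (intervalIntegral.intervalIntegrable_rpow' (by linarith)).const_mul β)
    (ae_restrict_of_forall_mem measurableSet_Ioi fun x (hx : 0 < x) => by positivity)
  have htail : ∀ x ∈ Ioi (0 : ℝ), ν.restrict (Ioc 0 r) {t | x < id t} *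
      ENNReal.ofReal (β * x ^ (β - 1)) =
        (Ioc 0 r).indicator (fun x => ν (Ioc x r) * ENNReal.ofReal (β * x ^ (β - 1))) x := by
    intro x (hx : 0 < x)
    have hset : {t | x < id t} ∩ Ioc 0 r = Ioc x r := by
      ext t
      simp only [mem_inter_iff, id, mem_Ioc]
      constructor
      · rintro ⟨hxt, -, htr⟩
        exact ⟨hxt, htr⟩
      · rintro ⟨hxt, htr⟩
        exact ⟨hxt, hx.trans hxt, htr⟩
    rw [Measure.restrict_apply' measurableSet_Ioc, hset]
    by_cases hxr : x ≤ r
    · rw [indicator_of_mem (show x ∈ Ioc 0 r from ⟨hx, hxr⟩)]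
    · rw [indicator_of_notMem fun h => hxr h.2, Ioc_eq_empty_of_le (not_le.1 hxr).le,
        measure_empty, zero_mul]
  calc ∫⁻ t in Ioc 0 r, ENNReal.ofReal (t ^ β) ∂ν
      = ∫⁻ t in Ioc 0 r, ENNReal.ofReal (∫ x in 0..id t, β * x ^ (β - 1)) ∂ν :=
        setLIntegral_congr_fun measurableSet_Ioc fun _ _ => by
          rw [← rpow_eq_integral_mul_rpow_sub_one hβ, id]
    _ = ∫⁻ x in Ioi 0, (Ioc 0 r).indicator
          (fun x => ν (Ioc x r) * ENNReal.ofReal (β * x ^ (β - 1))) x := by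
        rw [hlayer]
        exact setLIntegral_congr_fun measurableSet_Ioi htail
    _ = ∫⁻ x in Ioc 0 r, ν (Ioc x r) * ENNReal.ofReal (β * x ^ (β - 1)) := by
        rw [lintegral_indicator measurableSet_Ioc, Measure.restrict_restrict measurableSet_Ioc,
          inter_eq_left.2 fun x hx => hx.1]

section Primitive

variable {η : ℝ → ℝ} {r : ℝ}

lemma monotoneOn_primitive_Ioc (hnn : ∀ t ∈ Ioc 0 r, 0 ≤ η t) (hint : IntegrableOn η (Ioc 0 r)) :
    MonotoneOn (fun x => ∫ s in Ioc 0 x, η s) (Icc 0 r) := fun _ _ _ hy hxy =>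
  setIntegral_mono_set (hint.mono_set (Ioc_subset_Ioc_right hy.2))
    (ae_restrict_of_forall_mem measurableSet_Ioc fun t ht => hnn t ⟨ht.1, ht.2.trans hy.2⟩)
    (Ioc_subset_Ioc_right hxy).eventuallyLE

lemma primitive_Ioc_pos (hpos : ∀ t ∈ Ioc 0 r, 0 < η t) (hint : IntegrableOn η (Ioc 0 r))
    {x : ℝ} (hx : x ∈ Ioc 0 r) : 0 < ∫ s in Ioc 0 x, η s := by
  rw [← intervalIntegral.integral_of_le hx.1.le]
  exact intervalIntegral.intervalIntegral_pos_of_pos_on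
    ((intervalIntegrable_iff_integrableOn_Ioc_of_le hx.1.le).2
      (hint.mono_set (Ioc_subset_Ioc_right hx.2)))
    (fun t ht => hpos t ⟨ht.1, ht.2.le.trans hx.2⟩) hx.1

lemma withDensity_ofReal_Ioc (hnn : ∀ t ∈ Ioc 0 r, 0 ≤ η t) (hint : IntegrableOn η (Ioc 0 r))
    {a u : ℝ} (ha : 0 ≤ a) (hau : a ≤ u) (hu : u ≤ r) :
    volume.withDensity (fun t => ENNReal.ofReal (η t)) (Ioc a u) =
      ENNReal.ofReal ((∫ s in Ioc 0 u, η s) - ∫ s in Ioc 0 a, η s) := by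
  have hint' : ∀ v, 0 ≤ v → v ≤ r → IntervalIntegrable η volume 0 v := fun v hv hvr =>
    (intervalIntegrable_iff_integrableOn_Ioc_of_le hv).2 (hint.mono_set (Ioc_subset_Ioc_right hvr))
  rw [withDensity_apply _ measurableSet_Ioc, ← ofReal_integral_eq_lintegral_ofReal
      (hint.mono_set (Ioc_subset_Ioc ha hu))
      (ae_restrict_of_forall_mem measurableSet_Ioc fun t ht =>
        hnn t ⟨ha.trans_lt ht.1, ht.2.trans hu⟩),
    ← intervalIntegral.integral_of_le hau, ← intervalIntegral.integral_of_le (ha.trans hau),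
    ← intervalIntegral.integral_of_le ha,
    intervalIntegral.integral_interval_sub_left (hint' u (ha.trans hau) hu)
      (hint' a ha (hau.trans hu))]

lemma continuousOn_primitive_Ioc (hint : IntegrableOn η (Ioc 0 r)) :
    ContinuousOn (fun x => ∫ s in Ioc 0 x, η s) (Icc 0 r) :=
  intervalIntegral.continuousOn_primitive
    ((integrableOn_Icc_iff_integrableOn_Ioc (f := η) (μ := volume) (a := 0) (b := r)).2 hint)

lemma setLIntegral_withDensity_primitive_rpow_neg_le (hpos : ∀ t ∈ Ioc 0 r, 0 < η t)
    (hint : IntegrableOn η (Ioc 0 r)) {q : ℝ} (hq : 1 < q) {x : ℝ} (hx : x ∈ Ioc 0 r) :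
    ∫⁻ t in Ioc x r, ENNReal.ofReal ((∫ s in Ioc 0 t, η s) ^ (-q))
        ∂(volume.withDensity fun t => ENNReal.ofReal (η t)) ≤
      ENNReal.ofReal (q / (q - 1) * (∫ s in Ioc 0 x, η s) ^ (1 - q)) := by
  have hnn : ∀ t ∈ Ioc 0 r, 0 ≤ η t := fun t ht => (hpos t ht).le
  have hsub : Icc x r ⊆ Icc 0 r := Icc_subset_Icc_left hx.1.le
  exact setLIntegral_rpow_neg_le hq hx.2 ((monotoneOn_primitive_Ioc hnn hint).mono hsub)
    ((continuousOn_primitive_Ioc hint).mono hsub)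
    (fun u hu => withDensity_ofReal_Ioc hnn hint hx.1.le hu.1 hu.2) (primitive_Ioc_pos hpos hint hx)

end Primitive

lemma setLIntegral_rpow_mul_primitive_rpow_neg_le {η : ℝ → ℝ} {r q β : ℝ}
    (hpos : ∀ t ∈ Ioc 0 r, 0 < η t) (hint : IntegrableOn η (Ioc 0 r)) (hq : 1 < q) (hβ : 0 < β) :
    ∫⁻ t in Ioc 0 r, ENNReal.ofReal (t ^ β * η t * (∫ s in Ioc 0 t, η s) ^ (-q)) ≤
      ENNReal.ofReal (β * (q / (q - 1))) *
        ∫⁻ x in Ioc 0 r, ENNReal.ofReal ((∫ s in Ioc 0 x, η s) ^ (1 - q) * x ^ (β - 1)) := by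
  set Δ : ℝ → ℝ := fun x => ∫ s in Ioc 0 x, η s
  set μ := volume.withDensity fun t => ENNReal.ofReal (η t)
  set w : ℝ → ℝ≥0∞ := fun t => ENNReal.ofReal (Δ t ^ (-q))
  have hnn : ∀ t ∈ Ioc 0 r, 0 ≤ η t := fun t ht => (hpos t ht).le
  have hw : AEMeasurable w (μ.restrict (Ioc 0 r)) :=
    ((((continuousOn_primitive_Ioc hint).mono Ioc_subset_Icc_self).aemeasurable
      measurableSet_Ioc).pow_const _).ennreal_ofReal
  have hη : AEMeasurable (fun t => ENNReal.ofReal (η t)) (volume.restrict (Ioc 0 r)) :=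
    hint.aemeasurable.ennreal_ofReal
  calc ∫⁻ t in Ioc 0 r, ENNReal.ofReal (t ^ β * η t * Δ t ^ (-q))
      = ∫⁻ t in Ioc 0 r, ENNReal.ofReal (t ^ β) ∂(μ.withDensity w) := by
        rw [setLIntegral_withDensity_eq_setLIntegral_mul_non_measurable₀ _ hw _ measurableSet_Ioc
            (ae_of_all _ fun _ => ENNReal.ofReal_lt_top),
          setLIntegral_withDensity_eq_setLIntegral_mul_non_measurable₀ _ hη _ measurableSet_Ioc
            (ae_of_all _ fun _ => ENNReal.ofReal_lt_top)]
        refine setLIntegral_congr_fun measurableSet_Ioc fun t ht => ?_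
        simp only [Pi.mul_apply, w]
        rw [ENNReal.ofReal_mul (mul_nonneg (by have := ht.1; positivity) (hnn t ht)),
          ENNReal.ofReal_mul (by have := ht.1; positivity)]
        ring
    _ = ∫⁻ x in Ioc 0 r, μ.withDensity w (Ioc x r) * ENNReal.ofReal (β * x ^ (β - 1)) :=
        setLIntegral_rpow_eq_lintegral_measure_Ioc _ hβ r
    _ ≤ ∫⁻ x in Ioc 0 r, ENNReal.ofReal (q / (q - 1) * Δ x ^ (1 - q)) *
          ENNReal.ofReal (β * x ^ (β - 1)) :=
        setLIntegral_mono' measurableSet_Ioc fun x hx => by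
          grw [withDensity_apply _ measurableSet_Ioc,
            setLIntegral_withDensity_primitive_rpow_neg_le hpos hint hq hx]
    _ = ENNReal.ofReal (β * (q / (q - 1))) *
          ∫⁻ x in Ioc 0 r, ENNReal.ofReal (Δ x ^ (1 - q) * x ^ (β - 1)) := by
        rw [← lintegral_const_mul' _ _ ENNReal.ofReal_ne_top]
        refine setLIntegral_congr_fun measurableSet_Ioc fun x hx => ?_
        have hq' : 0 ≤ q / (q - 1) := div_nonneg (by linarith) (by linarith)
        have := (primitive_Ioc_pos hpos hint hx).le
        rw [← ENNReal.ofReal_mul (mul_nonneg hq' (by positivity)),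
          ← ENNReal.ofReal_mul (mul_nonneg hβ.le hq')]
        congr 1
        ring

theorem stmt13_general (n : ℕ) (p : ℝ) (hp : 1 < p)
    (α : ℝ) (hα2 : α ≤ (n : ℝ) - 1) :
    ∃ C : ℝ, 0 < C ∧
      ∀ η : ℝ → ℝ, (∀ t : ℝ, 0 < t → 0 < η t) →
        (∀ t : ℝ, 0 < t → IntegrableOn η (Set.Ioc 0 t)) →
        ∀ r : ℝ, 0 < r →
          (∫⁻ t in Set.Ioc (0 : ℝ) r,
              ENNReal.ofReal
                ((∫ s in Set.Ioc (0 : ℝ) t, s ^ ((n : ℝ) - 1 - α)) ^ (p / (p - 1)) *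
                  η t *
                  (∫ s in Set.Ioc (0 : ℝ) t, η s) ^ (-(p / (p - 1))))) ≤
            ENNReal.ofReal C *
              ∫⁻ x in Set.Ioc (0 : ℝ) r,
                ENNReal.ofReal
                  ((∫ s in Set.Ioc (0 : ℝ) x, η s) ^ (1 - p / (p - 1)) *
                    x ^ ((p / (p - 1)) * ((n : ℝ) - α) - 1)) := by
  set q := p / (p - 1)
  have hq : 1 < q := (one_lt_div (by linarith)).2 (by linarith)
  set m := (n : ℝ) - α
  have hm : 0 < m := by linarith
  have hβ : 0 < q * m := mul_pos (by linarith) hm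
  have hC : 0 < q * m * (q / (q - 1)) := mul_pos hβ (div_pos (by linarith) (by linarith))
  refine ⟨m ^ (-q) * (q * m * (q / (q - 1))), mul_pos (Real.rpow_pos_of_pos hm _) hC,
    fun η hpos hint r hr => ?_⟩
  have hpower : ∀ t ∈ Ioc (0 : ℝ) r,
      (∫ s in Ioc 0 t, s ^ ((n : ℝ) - 1 - α)) ^ q = m ^ (-q) * t ^ (q * m) := by
    intro t ht
    rw [integral_Ioc_zero_rpow ht.1.le (by linarith), show (n : ℝ) - 1 - α + 1 = m by ring,
      Real.div_rpow (Real.rpow_pos_of_pos ht.1 _).le hm.le, ← Real.rpow_mul ht.1.le,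
      Real.rpow_neg hm.le, mul_comm m q, div_eq_inv_mul]
  calc _ = ENNReal.ofReal (m ^ (-q)) * ∫⁻ t in Ioc 0 r,
          ENNReal.ofReal (t ^ (q * m) * η t * (∫ s in Ioc 0 t, η s) ^ (-q)) := by
        rw [← lintegral_const_mul' _ _ ENNReal.ofReal_ne_top]
        refine setLIntegral_congr_fun measurableSet_Ioc fun t ht => ?_
        rw [hpower t ht, ← ENNReal.ofReal_mul (Real.rpow_pos_of_pos hm _).le]
        ring_nf
    _ ≤ _ := by
        rw [ENNReal.ofReal_mul (Real.rpow_pos_of_pos hm _).le, mul_assoc]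
        gcongr
        exact setLIntegral_rpow_mul_primitive_rpow_neg_le (fun t ht => hpos t ht.1) (hint r hr)
          hq hβ

theorem stmt13 (n : ℕ) (hn : 0 < n) (p : ℝ) (hp : 1 < p)
    (α : ℝ) (hα1 : ((n : ℝ) - 1) / 2 ≤ α) (hα2 : α ≤ (n : ℝ) - 1) :
    ∃ C : ℝ, 0 < C ∧
      ∀ η : ℝ → ℝ, (∀ t : ℝ, 0 < t → 0 < η t) →
        (∀ t : ℝ, 0 < t → IntegrableOn η (Set.Ioc 0 t)) →
        ∀ r : ℝ, 0 < r →
          (∫⁻ t in Set.Ioc (0 : ℝ) r,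
              ENNReal.ofReal
                ((∫ s in Set.Ioc (0 : ℝ) t, s ^ ((n : ℝ) - 1 - α)) ^ (p / (p - 1)) *
                  η t *
                  (∫ s in Set.Ioc (0 : ℝ) t, η s) ^ (-(p / (p - 1))))) ≤
            ENNReal.ofReal C *
              ∫⁻ x in Set.Ioc (0 : ℝ) r,
                ENNReal.ofReal
                  ((∫ s in Set.Ioc (0 : ℝ) x, η s) ^ (1 - p / (p - 1)) *
                    x ^ ((p / (p - 1)) * ((n : ℝ) - α) - 1)) :=
  stmt13_general n p hp α hα2
end
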